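/- arXiv:1803.03569 — 9 statements merged into one kernel-verified Lean document; each statement's English description precedes it below -/
import Mathlib

section
/- Let G be a finite group and let U_1, ..., U_n, V be subgroups of G such that |U_1V| + ... + |U_nV| ≥ |G|, and such that VU_i ⊆ U_jU_i for every pair of indices 1 ≤ i < j ≤ n. Then the tuple (U_1, ..., U_n, V) is not harmonic; i.e. there do not exist g_1, ..., g_n, g_v ∈ G such that the cosets g_1U_1, ..., g_nU_n, g_vV are pairwise disjoint. -/
open scoped Pointwise

theorem not_harmonic_of_products_cover
    (G : Type*) [Group G] [Fintype G]
    (n : ℕ) (U : Fin n → Subgroup G) (V : Subgroup G)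
    (hcard : Fintype.card G ≤ ∑ i : Fin n, Nat.card ((U i : Set G) * (V : Set G) : Set G))
    (hsub : ∀ i j : Fin n, i < j →
      (V : Set G) * (U i : Set G) ⊆ (U j : Set G) * (U i : Set G)) :
    ¬ ∃ (g : Fin n → G) (gv : G),
      (∀ i j : Fin n, i ≠ j →
        Disjoint (g i • (U i : Set G)) (g j • (U j : Set G))) ∧
      (∀ i : Fin n, Disjoint (g i • (U i : Set G)) (gv • (V : Set G))) := by
  classical
  rintro ⟨g, gv, hdis, hdisV⟩
  set T : Fin n → Set G := fun i => g i • ((U i : Set G) * (V : Set G)) with hT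
  -- gv does not belong to any T i
  have hgv : ∀ i, gv ∉ T i := by
    intro i hi
    obtain ⟨y, hy, hxy⟩ := hi
    obtain ⟨u, hu, v, hv, rfl⟩ := hy
    have h1 : g i * u ∈ g i • (U i : Set G) := ⟨u, hu, rfl⟩
    have h2 : g i * u ∈ gv • (V : Set G) := by
      refine ⟨v⁻¹, V.inv_mem hv, ?_⟩
      simp only [smul_eq_mul] at hxy ⊢
      rw [← hxy]; group
    exact Set.disjoint_left.mp (hdisV i) h1 h2
  -- the T i are pairwise disjoint; key case i < j
  have key : ∀ i j : Fin n, i < j → Disjoint (T i) (T j) := by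
    intro i j hij
    rw [Set.disjoint_left]
    rintro x ⟨y, hy, hxy⟩ ⟨z, hz, hxz⟩
    obtain ⟨u, hu, v, hv, rfl⟩ := hy
    obtain ⟨u', hu', v', hv', rfl⟩ := hz
    -- g i * (u*v) = g j * (u'*v')
    have heq : g i * (u * v) = g j * (u' * v') := by
      simp only [smul_eq_mul] at hxy hxz; rw [hxy, hxz]
    have hmem : (v' * v⁻¹) * (1 : G) ∈ (V : Set G) * (U i : Set G) :=
      ⟨v' * v⁻¹, V.mul_mem hv' (V.inv_mem hv), 1, (U i).one_mem, rfl⟩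
    obtain ⟨a, ha, b, hb, hab⟩ := hsub i j hij hmem
    -- g i * (u * b⁻¹) = g j * (u' * a)
    have heq2 : g i * (u * b⁻¹) = g j * (u' * a) := by
      have hvv : v' * v⁻¹ = a * b := by simpa using hab.symm
      have : g i * u = g j * u' * (v' * v⁻¹) := by
        have h4 := congrArg (· * v⁻¹) heq
        simp only [mul_assoc] at h4 ⊢
        simpa using h4
      rw [hvv] at this
      calc g i * (u * b⁻¹) = g i * u * b⁻¹ := by group
        _ = g j * u' * (a * b) * b⁻¹ := by rw [this]
        _ = g j * (u' * a) := by group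
    have h1 : g i * (u * b⁻¹) ∈ g i • (U i : Set G) :=
      ⟨u * b⁻¹, (U i).mul_mem hu ((U i).inv_mem hb), rfl⟩
    have h2 : g i * (u * b⁻¹) ∈ g j • (U j : Set G) :=
      ⟨u' * a, (U j).mul_mem hu' ha, by simp [heq2]⟩
    exact Set.disjoint_left.mp (hdis i j hij.ne) h1 h2
  have hpair : ∀ i j : Fin n, i ≠ j → Disjoint (T i) (T j) := by
    intro i j hij
    rcases lt_or_gt_of_ne hij with h | h
    · exact key i j h
    · exact (key j i h).symm
  -- counting
  let S : Fin n → Finset G := fun i => (T i).toFinset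
  have hScard : ∀ i, (S i).card = Nat.card ((U i : Set G) * (V : Set G) : Set G) := by
    intro i
    have : (S i).card = (T i).ncard := (Set.ncard_eq_toFinset_card' _).symm
    rw [this, hT]
    simp only
    rw [Set.ncard_smul_set]
    exact (Nat.card_coe_set_eq _).symm
  have hSdis : ∀ i ∈ (Finset.univ : Finset (Fin n)), ∀ j ∈ (Finset.univ : Finset (Fin n)),
      i ≠ j → Disjoint (S i) (S j) := by
    intro i _ j _ hij
    simpa [S, Finset.disjoint_left, Set.disjoint_left] using
      fun x hx hx' => Set.disjoint_left.mp (hpair i j hij)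
        (by simpa using hx) (by simpa using hx')
  have hbu : (Finset.univ.biUnion S).card = ∑ i : Fin n, (S i).card :=
    Finset.card_biUnion hSdis
  have hsubset : Finset.univ.biUnion S ⊆ Finset.univ.erase gv := by
    intro x hx
    rw [Finset.mem_biUnion] at hx
    obtain ⟨i, _, hxi⟩ := hx
    refine Finset.mem_erase.mpr ⟨?_, Finset.mem_univ x⟩
    rintro rfl
    exact hgv i (Set.mem_toFinset.mp hxi)
  have hle : ∑ i : Fin n, (S i).card ≤ Fintype.card G - 1 := by
    rw [← hbu]
    calc (Finset.univ.biUnion S).card ≤ (Finset.univ.erase gv).card :=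
          Finset.card_le_card hsubset
      _ = Fintype.card G - 1 := by
          rw [Finset.card_erase_of_mem (Finset.mem_univ gv), Finset.card_univ]
  have hsum : ∑ i : Fin n, (S i).card = ∑ i : Fin n, Nat.card ((U i : Set G) * (V : Set G) : Set G) := by
    exact Finset.sum_congr rfl fun i _ => hScard i
  have hpos : 0 < Fintype.card G := Fintype.card_pos
  omega
end

section
/- Let G be a finite group and let U, V, W be subgroups of G such that |VU| + |WU| ≥ |G| and UV ⊆ WV. Then the triple (U, V, W) is not harmonic; i.e. there do not exist g_u, g_v, g_w ∈ G such that the cosets g_uU, g_vV, g_wW are pairwise disjoint. -/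
open scoped Pointwise

theorem not_harmonic_triple_of_products_cover
    (G : Type*) [Group G] [Fintype G] (U V W : Subgroup G)
    (hcard : Fintype.card G ≤
      Nat.card ((V : Set G) * (U : Set G) : Set G) +
      Nat.card ((W : Set G) * (U : Set G) : Set G))
    (hsub : (U : Set G) * (V : Set G) ⊆ (W : Set G) * (V : Set G)) :
    ¬ ∃ gu gv gw : G,
      Disjoint (gu • (U : Set G)) (gv • (V : Set G)) ∧
      Disjoint (gu • (U : Set G)) (gw • (W : Set G)) ∧
      Disjoint (gv • (V : Set G)) (gw • (W : Set G)) := by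
  rintro ⟨gu, gv, gw, h1, h2, h3⟩
  set A : Set G := gv • ((V : Set G) * (U : Set G)) with hAdef
  set B : Set G := gw • ((W : Set G) * (U : Set G)) with hBdef
  have huA : gu ∉ A := by
    rintro ⟨x, ⟨v, hv, u, hu, rfl⟩, hx⟩
    have m1 : gu * u⁻¹ ∈ gu • (U : Set G) := ⟨u⁻¹, U.inv_mem hu, rfl⟩
    refine Set.disjoint_left.1 h1 m1 ⟨v, hv, ?_⟩
    show gv * v = gu * u⁻¹
    have : gv * (v * u) = gu := hx
    rw [← this]; group
  have huB : gu ∉ B := by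
    rintro ⟨x, ⟨w, hw, u, hu, rfl⟩, hx⟩
    have m1 : gu * u⁻¹ ∈ gu • (U : Set G) := ⟨u⁻¹, U.inv_mem hu, rfl⟩
    refine Set.disjoint_left.1 h2 m1 ⟨w, hw, ?_⟩
    show gw * w = gu * u⁻¹
    have : gw * (w * u) = gu := hx
    rw [← this]; group
  have hAcard : A.ncard = Nat.card ((V : Set G) * (U : Set G) : Set G) := by
    rw [hAdef, Set.ncard_smul_set, Nat.card_coe_set_eq]
  have hBcard : B.ncard = Nat.card ((W : Set G) * (U : Set G) : Set G) := by
    rw [hBdef, Set.ncard_smul_set, Nat.card_coe_set_eq]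
  have hne : (A ∩ B).Nonempty := by
    by_contra h
    rw [Set.not_nonempty_iff_eq_empty] at h
    have hunion : (A ∪ B).ncard = A.ncard + B.ncard :=
      Set.ncard_union_eq (Set.disjoint_iff_inter_eq_empty.2 h) (Set.toFinite A) (Set.toFinite B)
    have hss : A ∪ B ⊂ Set.univ := by
      refine Set.ssubset_univ_iff.2 fun heq => ?_
      have : gu ∈ A ∪ B := heq ▸ Set.mem_univ gu
      rcases this with h | h
      · exact huA h
      · exact huB h
    have hlt : (A ∪ B).ncard < Fintype.card G := by
      have := Set.ncard_lt_ncard hss Set.finite_univ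
      rwa [Set.ncard_univ, Nat.card_eq_fintype_card] at this
    omega
  obtain ⟨x, ⟨⟨y, ⟨v, hv, u, hu, rfl⟩, hy⟩, ⟨z, ⟨w, hw, u', hu', rfl⟩, hz⟩⟩⟩ := hne
  have heq : gv * (v * u) = gw * (w * u') := by
    have hy' : gv * (v * u) = x := hy
    have hz' : gw * (w * u') = x := hz
    rw [hy', hz']
  obtain ⟨w₂, hw₂, v₂, hv₂, ht⟩ :=
    hsub ⟨u' * u⁻¹, U.mul_mem hu' (U.inv_mem hu), v⁻¹, V.inv_mem hv, rfl⟩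
  have hgv : gv = gw * w * (u' * u⁻¹ * v⁻¹) := by
    have h' : gv = gw * (w * u') * (v * u)⁻¹ := eq_mul_inv_of_mul_eq heq
    rw [h']; group
  have m1 : gv * v₂⁻¹ ∈ gv • (V : Set G) := ⟨v₂⁻¹, V.inv_mem hv₂, rfl⟩
  refine Set.disjoint_left.1 h3 m1 ⟨w * w₂, W.mul_mem hw hw₂, ?_⟩
  show gw * (w * w₂) = gv * v₂⁻¹
  have ht' : w₂ * v₂ = u' * u⁻¹ * v⁻¹ := ht
  rw [hgv, ← ht']; group
end

section
/- Let G be a finite group and let U, V, W be subgroups of G with [G:U] = a·r_u, [G:V] = a·r_v, [G:W] = a·r_w, where a, r_u, r_v, r_w are positive integers and r_u, r_v, r_w are pairwise coprime. If α(U,V) = α(U,W) = α(V,W) = 1, then VU = UV = UW = WU = VW = WV; in particular UV is a subgroup of G and [G:UV] = a. -/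
open scoped Pointwise

/-- `alphaIdx A B` is the integer `α(A,B)` satisfying
`[G : A ⊓ B] = lcm([G:A],[G:B]) · α(A,B)`. -/
noncomputable def alphaIdx {G : Type*} [Group G] (A B : Subgroup G) : ℕ :=
  (A ⊓ B).index / Nat.lcm A.index B.index

/-!
Since `|AB| · |A ∩ B| = |A| · |B|`, i.e. `|AB| · [G:A] · [G:B] = |G| · [G:A ∩ B]`, for
`[G:A] = a·p` and `[G:B] = a·q` with `p, q` coprime the condition `α(A,B) = 1`, which reads
`[G:A ∩ B] = a·p·q`, says exactly that `|AB| = |G|/a`.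
The triple intersection has index `a·r_u·r_v·r_w`: it is a multiple of
`lcm([G:U], [G:V ∩ W])` and at most `[G:U ∩ V] · [V : V ∩ W]`. So `U(V ∩ W)` also has `|G|/a`
elements, and as it lies in both `UV` and `UW`, these coincide. Doing the same at `V` and `W`
and inverting (`(XY)⁻¹ = YX`) makes all six products equal; in particular `UV = VU` is a
subgroup, of order `|G|/a`.
-/

namespace Subgroup

variable {G : Type*} [Group G]

theorem card_image_mk_eq_relIndex (A B : Subgroup G) :
    Nat.card ((↑) '' (A : Set G) : Set (G ⧸ B)) = B.relIndex A := by
  have smul_mk_one (a : A) : a • ((1 : G) : G ⧸ B) = ((a : G) : G ⧸ B) :=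
    (MulAction.Quotient.smul_mk B (a : G) 1).trans (congrArg _ (mul_one _))
  have orbit_eq : MulAction.orbit A ((1 : G) : G ⧸ B) = (↑) '' (A : Set G) := by
    ext x
    simp [MulAction.mem_orbit_iff, smul_mk_one]
  have stabilizer_eq : MulAction.stabilizer A ((1 : G) : G ⧸ B) = B.subgroupOf A := by
    ext a
    simp [mem_subgroupOf, smul_mk_one, QuotientGroup.eq]
  rw [relIndex, ← stabilizer_eq, MulAction.index_stabilizer, orbit_eq, Nat.card_coe_set_eq]

theorem card_mul_eq_card_mul_relIndex (A B : Subgroup G) :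
    Nat.card ((A : Set G) * (B : Set G)) = Nat.card B * B.relIndex A := by
  rw [card_mul_eq_card_subgroup_mul_card_quotient, card_image_mk_eq_relIndex]

theorem card_mul_mul_index_mul_index (A B : Subgroup G) :
    Nat.card ((A : Set G) * (B : Set G)) * (A.index * B.index) = Nat.card G * (A ⊓ B).index := by
  have h : B.relIndex A * A.index = (A ⊓ B).index := by
    rw [← inf_relIndex_right, relIndex_mul_index inf_le_right, inf_comm]
  rw [card_mul_eq_card_mul_relIndex, ← h, ← card_mul_index B]
  ring

theorem index_inf_eq_lcm_of_alphaIdx_eq_one {A B : Subgroup G} (h : alphaIdx A B = 1) :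
    (A ⊓ B).index = Nat.lcm A.index B.index :=
  (Nat.eq_mul_of_div_eq_right
    (Nat.lcm_dvd (index_dvd_of_le inf_le_left) (index_dvd_of_le inf_le_right)) h).trans
    (mul_one _)

theorem index_inf_eq_of_alphaIdx_eq_one {A B : Subgroup G} {a p q : ℕ} (hA : A.index = a * p)
    (hB : B.index = a * q) (hpq : p.Coprime q) (h : alphaIdx A B = 1) :
    (A ⊓ B).index = a * (p * q) := by
  rw [index_inf_eq_lcm_of_alphaIdx_eq_one h, hA, hB, Nat.lcm_mul_left, hpq.lcm_eq_mul]

section Finite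

variable [Finite G]

theorem index_inf_inf_mul_index_le (A B C : Subgroup G) :
    (A ⊓ B ⊓ C).index * B.index ≤ (A ⊓ B).index * (B ⊓ C).index := by
  have hABC : C.relIndex (A ⊓ B) * (A ⊓ B).index = (A ⊓ B ⊓ C).index := by
    rw [← inf_relIndex_left, relIndex_mul_index inf_le_left]
  have hBC : C.relIndex B * B.index = (B ⊓ C).index := by
    rw [← inf_relIndex_left, relIndex_mul_index inf_le_left]
  calc (A ⊓ B ⊓ C).index * B.index = C.relIndex (A ⊓ B) * ((A ⊓ B).index * B.index) := by
        rw [← hABC, mul_assoc]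
    _ ≤ C.relIndex B * ((A ⊓ B).index * B.index) := by
        gcongr
        exact relIndex_le_of_le_right inf_le_right
          fun h ↦ C.index_ne_zero_of_finite (index_eq_zero_of_relIndex_eq_zero h)
    _ = (A ⊓ B).index * (B ⊓ C).index := by
        rw [← hBC]
        ring

theorem index_inf_inf_eq {A B C : Subgroup G} {a p q r : ℕ} (hA : A.index = a * p)
    (hB : B.index = a * q) (hpq : p.Coprime q) (hpr : p.Coprime r)
    (hAB : (A ⊓ B).index = a * (p * q)) (hBC : (B ⊓ C).index = a * (q * r)) :
    (A ⊓ (B ⊓ C)).index = a * (p * (q * r)) := by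
  have hlcm : a * (p * (q * r)) ∣ (A ⊓ (B ⊓ C)).index := by
    have h := Nat.lcm_dvd (index_dvd_of_le (inf_le_left : A ⊓ (B ⊓ C) ≤ A))
      (index_dvd_of_le inf_le_right)
    rwa [hA, hBC, Nat.lcm_mul_left, (hpq.mul_right hpr).lcm_eq_mul] at h
  have hle : (A ⊓ (B ⊓ C)).index * (a * q) ≤ a * (p * (q * r)) * (a * q) := by
    calc (A ⊓ (B ⊓ C)).index * (a * q) ≤ (A ⊓ B).index * (B ⊓ C).index := by
          rw [← inf_assoc, ← hB]; exact index_inf_inf_mul_index_le A B C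
      _ = a * (p * (q * r)) * (a * q) := by rw [hAB, hBC]; ring
  have haq : 0 < a * q := hB ▸ Nat.pos_of_ne_zero B.index_ne_zero_of_finite
  exact Nat.le_antisymm (Nat.le_of_mul_le_mul_right hle haq)
    (Nat.le_of_dvd (Nat.pos_of_ne_zero (A ⊓ (B ⊓ C)).index_ne_zero_of_finite) hlcm)

theorem card_mul_mul_eq_card_of_index_inf {A B : Subgroup G} {a p q : ℕ} (hA : A.index = a * p)
    (hB : B.index = a * q) (hAB : (A ⊓ B).index = a * (p * q)) :
    Nat.card ((A : Set G) * (B : Set G)) * a = Nat.card G := by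
  have h := card_mul_mul_index_mul_index A B
  rw [hA, hB, hAB] at h
  have hapq : a * (p * q) ≠ 0 := hAB ▸ (A ⊓ B).index_ne_zero_of_finite
  refine Nat.eq_of_mul_eq_mul_right (Nat.pos_of_ne_zero hapq) ?_
  rw [← h]
  ring

theorem mul_inf_eq_mul_of_index_inf {A B C : Subgroup G} {a p q r : ℕ}
    (hA : A.index = a * p) (hB : B.index = a * q) (hpq : p.Coprime q) (hpr : p.Coprime r)
    (hAB : (A ⊓ B).index = a * (p * q)) (hBC : (B ⊓ C).index = a * (q * r)) :
    (A : Set G) * ((B ⊓ C : Subgroup G) : Set G) = (A : Set G) * (B : Set G) := by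
  have hsub : (A : Set G) * ((B ⊓ C : Subgroup G) : Set G) ⊆ (A : Set G) * (B : Set G) :=
    Set.mul_subset_mul_left (fun _ hx ↦ (mem_inf.mp hx).1)
  have hcard : Nat.card ((A : Set G) * ((B ⊓ C : Subgroup G) : Set G)) * a =
      Nat.card ((A : Set G) * (B : Set G)) * a :=
    (card_mul_mul_eq_card_of_index_inf hA hBC (index_inf_inf_eq hA hB hpq hpr hAB hBC)).trans
      (card_mul_mul_eq_card_of_index_inf hA hB hAB).symm
  have ha : 0 < a := Nat.pos_of_ne_zero (left_ne_zero_of_mul (hA ▸ A.index_ne_zero_of_finite))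
  exact Set.eq_of_subset_of_ncard_le hsub (Nat.eq_of_mul_eq_mul_right ha hcard).ge
    (Set.toFinite _)

theorem mul_eq_mul_of_index_inf {A B C : Subgroup G} {a p q r : ℕ}
    (hA : A.index = a * p) (hB : B.index = a * q) (hC : C.index = a * r)
    (hpq : p.Coprime q) (hpr : p.Coprime r) (hAB : (A ⊓ B).index = a * (p * q))
    (hAC : (A ⊓ C).index = a * (p * r)) (hBC : (B ⊓ C).index = a * (q * r)) :
    (A : Set G) * (B : Set G) = (A : Set G) * (C : Set G) := by
  have hCB : (C ⊓ B).index = a * (r * q) := by rw [inf_comm, hBC, mul_comm q]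
  rw [← mul_inf_eq_mul_of_index_inf hA hB hpq hpr hAB hBC,
    ← mul_inf_eq_mul_of_index_inf hA hC hpr hpq hAC hCB, inf_comm]

end Finite

theorem inv_coe_mul_coe (H K : Subgroup G) :
    ((H : Set G) * (K : Set G))⁻¹ = (K : Set G) * (H : Set G) := by
  rw [mul_inv_rev, inv_coe_set, inv_coe_set]

theorem exists_coe_eq_mul_of_mul_comm (H K : Subgroup G)
    (h : (K : Set G) * (H : Set G) = (H : Set G) * (K : Set G)) :
    ∃ L : Subgroup G, (L : Set G) = (H : Set G) * (K : Set G) := by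
  have mul_self : (H : Set G) * K * (H * K) = H * K := by
    rw [mul_assoc, ← mul_assoc (K : Set G), h, mul_assoc, coe_mul_coe, ← mul_assoc, coe_mul_coe]
  refine ⟨{ carrier := (H : Set G) * K
            one_mem' := ⟨1, H.one_mem, 1, K.one_mem, mul_one 1⟩
            mul_mem' := fun hx hy ↦ mul_self ▸ Set.mul_mem_mul hx hy
            inv_mem' := fun hx ↦ ?_ }, rfl⟩
  rw [← h, ← inv_coe_mul_coe]
  exact Set.inv_mem_inv.mpr hx

end Subgroup

theorem products_equal_of_alphas_one_general
    (G : Type*) [Group G] [Fintype G] (U V W : Subgroup G)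
    (a ru rv rw : ℕ)
    (hU : U.index = a * ru) (hV : V.index = a * rv) (hW : W.index = a * rw)
    (huv : Nat.Coprime ru rv) (huw : Nat.Coprime ru rw) (hvw : Nat.Coprime rv rw)
    (hUV : alphaIdx U V = 1) (hUW : alphaIdx U W = 1) (hVW : alphaIdx V W = 1) :
    (V : Set G) * (U : Set G) = (U : Set G) * (V : Set G) ∧
    (U : Set G) * (V : Set G) = (U : Set G) * (W : Set G) ∧
    (U : Set G) * (W : Set G) = (W : Set G) * (U : Set G) ∧
    (W : Set G) * (U : Set G) = (V : Set G) * (W : Set G) ∧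
    (V : Set G) * (W : Set G) = (W : Set G) * (V : Set G) ∧
    ∃ H : Subgroup G, (H : Set G) = (U : Set G) * (V : Set G) ∧ H.index = a := by
  have iUV := Subgroup.index_inf_eq_of_alphaIdx_eq_one hU hV huv hUV
  have iUW := Subgroup.index_inf_eq_of_alphaIdx_eq_one hU hW huw hUW
  have iVW := Subgroup.index_inf_eq_of_alphaIdx_eq_one hV hW hvw hVW
  have iVU : (V ⊓ U).index = a * (rv * ru) := by rw [inf_comm, iUV, mul_comm rv]
  have iWU : (W ⊓ U).index = a * (rw * ru) := by rw [inf_comm, iUW, mul_comm rw]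
  have iWV : (W ⊓ V).index = a * (rw * rv) := by rw [inf_comm, iVW, mul_comm rw]
  have eU := Subgroup.mul_eq_mul_of_index_inf hU hV hW huv huw iUV iUW iVW
  have eV := Subgroup.mul_eq_mul_of_index_inf hV hU hW huv.symm hvw iVU iVW iUW
  have eW := Subgroup.mul_eq_mul_of_index_inf hW hU hV huw.symm hvw.symm iWU iWV iUV
  have uw : (U : Set G) * W = U * V := eU.symm
  have wv : (W : Set G) * V = U * V := by
    rw [← Subgroup.inv_coe_mul_coe, ← eV, Subgroup.inv_coe_mul_coe]
  have vw : (V : Set G) * W = U * V := by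
    rw [← Subgroup.inv_coe_mul_coe, ← eW, Subgroup.inv_coe_mul_coe, uw]
  have vu : (V : Set G) * U = U * V := eV.trans vw
  have wu : (W : Set G) * U = U * V := eW.trans wv
  refine ⟨vu, uw.symm, uw.trans wu.symm, wu.trans vw.symm, vw.trans wv.symm, ?_⟩
  obtain ⟨H, hH⟩ := Subgroup.exists_coe_eq_mul_of_mul_comm U V vu
  refine ⟨H, hH, ?_⟩
  have hcard : Nat.card H * a = Nat.card G := by
    rw [← SetLike.coe_sort_coe, hH]
    exact Subgroup.card_mul_mul_eq_card_of_index_inf hU hV iUV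
  exact Nat.eq_of_mul_eq_mul_left Nat.card_pos (H.card_mul_index.trans hcard.symm)

theorem products_equal_of_alphas_one
    (G : Type*) [Group G] [Fintype G] (U V W : Subgroup G)
    (a ru rv rw : ℕ) (ha : 0 < a) (hru : 0 < ru) (hrv : 0 < rv) (hrw : 0 < rw)
    (hU : U.index = a * ru) (hV : V.index = a * rv) (hW : W.index = a * rw)
    (huv : Nat.Coprime ru rv) (huw : Nat.Coprime ru rw) (hvw : Nat.Coprime rv rw)
    (hUV : alphaIdx U V = 1) (hUW : alphaIdx U W = 1) (hVW : alphaIdx V W = 1) :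
    (V : Set G) * (U : Set G) = (U : Set G) * (V : Set G) ∧
    (U : Set G) * (V : Set G) = (U : Set G) * (W : Set G) ∧
    (U : Set G) * (W : Set G) = (W : Set G) * (U : Set G) ∧
    (W : Set G) * (U : Set G) = (V : Set G) * (W : Set G) ∧
    (V : Set G) * (W : Set G) = (W : Set G) * (V : Set G) ∧
    ∃ H : Subgroup G, (H : Set G) = (U : Set G) * (V : Set G) ∧ H.index = a :=
  products_equal_of_alphas_one_general G U V W a ru rv rw hU hV hW huv huw hvw hUV hUW hVW
end

section
/- Let G be a finite group and let U_1, ..., U_n, V be subgroups of G with [G:U_i] = a_i·r_i for 1 ≤ i ≤ n and [G:V] = a·r, where r_1, ..., r_n, r are pairwise coprime positive integers and a_1, ..., a_n, a are positive integers. Assume that the sum over i of 1/a_i is at least 1, and that for each 1 ≤ i ≤ n: a_i divides a, gcd(a/a_i, r_i) = 1, and α(U_i, V) = 1. Then the tuple (U_1, ..., U_n, V) is not harmonic; i.e. there do not exist g_1, ..., g_n, g_v ∈ G such that the cosets g_1U_1, ..., g_nU_n, g_vV are pairwise disjoint. -/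
/-!
Put `W_i = U_i ⊓ V`. The condition `α(U_i, V) = 1` and the arithmetic hypotheses give
`[G : W_i] = a r r_i`, hence `[V : W_i] = r_i` and `[U_i : W_i] = a r / a_i`, which is the number
of left cosets of `V` met by `g_i U_i`. As the `[V : W_i]` are pairwise coprime, `V = W_i W_j`, so
two cosets `g_i U_i`, `g_j U_j` meeting a common coset of `V` would meet each other. Disjointness
thus forces `∑ a r / a_i` cosets of `V`, all different from `g_v V`, to fit among the `a r` cosets
of `V`, contradicting `∑ 1 / a_i ≥ 1`.
-/

open scoped Pointwise

open scoped Function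

theorem Nat.lcm_mul_eq_of_dvd_of_coprime {d a s t : ℕ} (hd : d ∣ a) (hs : (a / d).Coprime s)
    (hst : s.Coprime t) : Nat.lcm (d * s) (a * t) = a * t * s := by
  obtain ⟨c, rfl⟩ := hd
  rcases Nat.eq_zero_or_pos d with rfl | hd
  · simp
  rw [Nat.mul_div_cancel_left c hd] at hs
  rw [mul_assoc, Nat.lcm_mul_left, (hs.symm.mul_right hst).lcm_eq_mul]
  ring

theorem Set.sum_ncard_lt_card_of_pairwise_disjoint {X ι : Type*} [Finite X] [Fintype ι]
    {T : ι → Set X} (hT : Pairwise (Disjoint on T)) {x : X} (hx : ∀ i, x ∉ T i) :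
    ∑ i, (T i).ncard < Nat.card X := by
  rw [← finsum_eq_sum_of_fintype, ← Set.ncard_iUnion_of_finite (fun _ ↦ Set.toFinite _) hT]
  refine Set.ncard_lt_card fun h ↦ ?_
  obtain ⟨i, hi⟩ := Set.mem_iUnion.mp (h ▸ Set.mem_univ x)
  exact hx i hi

theorem index_inf_eq_lcm_of_alphaIdx_eq_one {G : Type*} [Group G] {A B : Subgroup G}
    (h : alphaIdx A B = 1) : (A ⊓ B).index = Nat.lcm A.index B.index :=
  (Nat.eq_of_dvd_of_div_eq_one (Nat.lcm_dvd (Subgroup.index_dvd_of_le inf_le_left)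
    (Subgroup.index_dvd_of_le inf_le_right)) h).symm

namespace Subgroup

variable {G : Type*} [Group G]

theorem relIndex_mul_index_eq_index_inf (A B : Subgroup G) :
    B.relIndex A * A.index = (A ⊓ B).index :=
  inf_relIndex_left A B ▸ relIndex_mul_index inf_le_left

theorem smul_coe_one (U V : Subgroup G) (u : U) : u • ((1 : G) : G ⧸ V) = (u : G) := by
  change ((u * 1 : G) : G ⧸ V) = _
  rw [mul_one]

theorem ncard_orbit_coe_one (U V : Subgroup G) :
    (MulAction.orbit U ((1 : G) : G ⧸ V)).ncard = V.relIndex U := by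
  rw [← MulAction.index_stabilizer, relIndex]
  congr 1
  ext u
  simp [smul_coe_one, mem_subgroupOf, QuotientGroup.eq]

theorem image_coe_smul_eq_smul_orbit (g : G) (U V : Subgroup G) :
    ((↑) '' (g • (U : Set G)) : Set (G ⧸ V)) =
      g • MulAction.orbit U ((1 : G) : G ⧸ V) := by
  ext q
  simp only [Set.mem_image, Set.mem_smul_set, MulAction.mem_orbit_iff, smul_coe_one]
  constructor
  · rintro ⟨_, ⟨u, hu, rfl⟩, rfl⟩
    exact ⟨_, ⟨⟨u, hu⟩, rfl⟩, rfl⟩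
  · rintro ⟨_, ⟨u, rfl⟩, rfl⟩
    exact ⟨_, ⟨u, u.2, rfl⟩, rfl⟩

theorem ncard_image_coe_smul (g : G) (U V : Subgroup G) :
    ((↑) '' (g • (U : Set G)) : Set (G ⧸ V)).ncard = V.relIndex U := by
  rw [image_coe_smul_eq_smul_orbit, Set.ncard_smul_set, ncard_orbit_coe_one]

theorem coe_notMem_image_coe_smul {U V : Subgroup G} {g gv : G}
    (h : Disjoint (g • (U : Set G)) (gv • (V : Set G))) :
    (gv : G ⧸ V) ∉ ((↑) '' (g • (U : Set G)) : Set (G ⧸ V)) := by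
  rintro ⟨s, hs, hsv⟩
  exact Set.disjoint_left.mp h hs ((mem_leftCoset_iff gv).mpr (QuotientGroup.eq.mp hsv.symm))

variable [Finite G]

theorem relIndex_eq_index_of_coprime {A B : Subgroup G} (h : A.index.Coprime B.index) :
    B.relIndex A = B.index := by
  have hdvd : B.index ∣ B.relIndex A := by
    refine h.symm.dvd_of_dvd_mul_right ?_
    rw [relIndex_mul_index_eq_index_inf]
    exact index_dvd_of_le inf_le_right
  have hle : B.relIndex A ≤ B.index := by
    rw [← relIndex_top_right B]
    exact relIndex_le_of_le_right le_top (by simpa using B.index_ne_zero_of_finite)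
  exact le_antisymm hle <|
    Nat.le_of_dvd (Nat.pos_of_ne_zero (B.subgroupOf A).index_ne_zero_of_finite) hdvd

theorem exists_mul_eq_of_coprime_index {A B : Subgroup G} (h : A.index.Coprime B.index) (k : G) :
    ∃ x ∈ A, ∃ y ∈ B, x * y = k := by
  have horbit : MulAction.orbit A ((1 : G) : G ⧸ B) = Set.univ := by
    by_contra hne
    have := Set.ncard_lt_card hne
    rw [ncard_orbit_coe_one, relIndex_eq_index_of_coprime h, index] at this
    exact lt_irrefl _ this
  obtain ⟨x, hx⟩ := MulAction.mem_orbit_iff.mp (horbit ▸ Set.mem_univ (k : G ⧸ B))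
  rw [smul_coe_one, QuotientGroup.eq] at hx
  exact ⟨x, x.2, _, hx, mul_inv_cancel_left _ _⟩

theorem exists_mul_eq_of_coprime_relIndex {A B V : Subgroup G}
    (h : (A.relIndex V).Coprime (B.relIndex V)) {v : G} (hv : v ∈ V) :
    ∃ x ∈ A, ∃ y ∈ B, x * y = v := by
  obtain ⟨x, hx, y, hy, hxy⟩ := exists_mul_eq_of_coprime_index h (⟨v, hv⟩ : V)
  exact ⟨x, hx, y, hy, congrArg Subtype.val hxy⟩

theorem disjoint_image_coe_smul_of_coprime_relIndex {A B V : Subgroup G}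
    (hcop : (A.relIndex V).Coprime (B.relIndex V)) {a b : G}
    (h : Disjoint (a • (A : Set G)) (b • (B : Set G))) :
    Disjoint ((↑) '' (a • (A : Set G)) : Set (G ⧸ V)) ((↑) '' (b • (B : Set G))) := by
  refine Set.disjoint_left.mpr ?_
  rintro _ ⟨s, hs, rfl⟩ ⟨t, ht, hts⟩
  obtain ⟨x, hx, y, hy, hxy⟩ :=
    exists_mul_eq_of_coprime_relIndex hcop (QuotientGroup.eq.mp hts.symm)
  have hsx : s * x ∈ a • (A : Set G) := by
    rw [mem_leftCoset_iff, ← mul_assoc]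
    exact A.mul_mem ((mem_leftCoset_iff a).mp hs) hx
  have hty : t * y⁻¹ ∈ b • (B : Set G) := by
    rw [mem_leftCoset_iff, ← mul_assoc]
    exact B.mul_mem ((mem_leftCoset_iff b).mp ht) (B.inv_mem hy)
  have hst : s * x = t * y⁻¹ := by
    rw [eq_mul_inv_iff_mul_eq, mul_assoc, hxy, mul_inv_cancel_left]
  exact Set.disjoint_left.mp h hsx (hst ▸ hty)

theorem sum_relIndex_lt_index_of_disjoint_cosets {ι : Type*} [Fintype ι]
    {U : ι → Subgroup G} {V : Subgroup G}
    (hcop : Pairwise fun i j ↦ ((U i).relIndex V).Coprime ((U j).relIndex V))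
    {g : ι → G} {gv : G}
    (hUU : Pairwise fun i j ↦ Disjoint (g i • (U i : Set G)) (g j • (U j : Set G)))
    (hUV : ∀ i, Disjoint (g i • (U i : Set G)) (gv • (V : Set G))) :
    ∑ i, V.relIndex (U i) < V.index := by
  calc ∑ i, V.relIndex (U i)
      = ∑ i, ((↑) '' (g i • (U i : Set G)) : Set (G ⧸ V)).ncard := by
        simp only [ncard_image_coe_smul]
    _ < V.index := Set.sum_ncard_lt_card_of_pairwise_disjoint
        (fun i j hij ↦ disjoint_image_coe_smul_of_coprime_relIndex (hcop hij) (hUU hij))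
        (fun i ↦ coe_notMem_image_coe_smul (hUV i))

end Subgroup

theorem not_harmonic_of_sum_of_reciprocals
    (G : Type*) [Group G] [Fintype G]
    (n : ℕ) (U : Fin n → Subgroup G) (V : Subgroup G)
    (a : ℕ) (r : ℕ) (ai ri : Fin n → ℕ)
    (hapos : 0 < a) (hrpos : 0 < r)
    (haipos : ∀ i, 0 < ai i) (hripos : ∀ i, 0 < ri i)
    (hUidx : ∀ i, (U i).index = ai i * ri i) (hVidx : V.index = a * r)
    (hcop : ∀ i j : Fin n, i ≠ j → Nat.Coprime (ri i) (ri j))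
    (hcopr : ∀ i, Nat.Coprime (ri i) r)
    (hsum : 1 ≤ ∑ i : Fin n, (1 : ℚ) / (ai i))
    (hdvd : ∀ i, ai i ∣ a)
    (hgcd : ∀ i, Nat.Coprime (a / ai i) (ri i))
    (halpha : ∀ i, alphaIdx (U i) V = 1) :
    ¬ ∃ (g : Fin n → G) (gv : G),
      (∀ i j : Fin n, i ≠ j →
        Disjoint (g i • (U i : Set G)) (g j • (U j : Set G))) ∧
      (∀ i : Fin n, Disjoint (g i • (U i : Set G)) (gv • (V : Set G))) := by
  rintro ⟨g, gv, hUU, hUV⟩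
  have hinf i : (U i ⊓ V).index = a * r * ri i := by
    rw [index_inf_eq_lcm_of_alphaIdx_eq_one (halpha i), hUidx, hVidx,
      Nat.lcm_mul_eq_of_dvd_of_coprime (hdvd i) (hgcd i) (hcopr i)]
  have hrelV i : (U i).relIndex V = ri i := by
    have h := V.relIndex_mul_index_eq_index_inf (U i)
    rw [inf_comm, hinf, hVidx, mul_comm] at h
    exact Nat.eq_of_mul_eq_mul_left (Nat.mul_pos hapos hrpos) h
  have hrelU i : (V.relIndex (U i) : ℚ) = a * r / ai i := by
    have h := (U i).relIndex_mul_index_eq_index_inf V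
    rw [hUidx, hinf, ← mul_assoc] at h
    rw [eq_div_iff (by exact_mod_cast (haipos i).ne'), ← Nat.cast_mul,
      Nat.eq_of_mul_eq_mul_right (hripos i) h, Nat.cast_mul]
  have hlt := Subgroup.sum_relIndex_lt_index_of_disjoint_cosets
    (fun i j hij ↦ by simpa only [hrelV] using hcop i j hij) (fun i j hij ↦ hUU i j hij) hUV
  have hlt' : ∑ i, (a * r : ℚ) / ai i < a * r := by
    simp only [← hrelU]
    exact_mod_cast hVidx ▸ hlt
  have hge : (a * r : ℚ) ≤ ∑ i, (a * r : ℚ) / ai i := by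
    simpa [div_eq_mul_one_div (a * r : ℚ), ← Finset.mul_sum] using
      mul_le_mul_of_nonneg_left hsum (by positivity : (0 : ℚ) ≤ a * r)
  exact hge.not_gt hlt'
end

section
/- Let G be a finite group and let U, V, W be subgroups of G such that the triple (U, V, W) is harmonic, with [G:U] = a·r_u, [G:V] = a·r_v, [G:W] = a·r_w, where a, r_u, r_v, r_w are positive integers and r_u, r_v, r_w are pairwise coprime. Let b = α(U,W). Then: (a) if α(U,V) = 1, then b ≤ α(V,W)·gcd(r_v, b); (b) if α(U,V) = 1 and b = α(V,W)·gcd(r_v, b), then |UV| + |VW| < |G|; (c) if α(U,V) = b, then a·b·r_u·r_v·r_w divides [G:U∩V∩W]. -/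
open scoped Pointwise

/-- Product formula: `|AB| * |A ⊓ B| = |A| * |B|`. -/
lemma card_mulset_mul_card_inf {G : Type*} [Group G] (A B : Subgroup G) :
    Nat.card ((A : Set G) * (B : Set G) : Set G) * Nat.card (A ⊓ B : Subgroup G)
      = Nat.card A * Nat.card B := by
  classical
  have hsec : ∀ y : ((A : Set G) * (B : Set G) : Set G),
      ∃ p : A × B, (p.1 : G) * (p.2 : G) = (y : G) := by
    rintro ⟨y, hy⟩
    rw [Set.mem_mul] at hy
    obtain ⟨x, hx, z, hz, h⟩ := hy
    exact ⟨(⟨x, hx⟩, ⟨z, hz⟩), h⟩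
  choose σ hσ using hsec
  let f : ((A : Set G) * (B : Set G) : Set G) × (A ⊓ B : Subgroup G) → A × B :=
    fun p => (⟨((σ p.1).1 : G) * (p.2 : G), mul_mem (σ p.1).1.2 (Subgroup.mem_inf.mp p.2.2).1⟩,
              ⟨((p.2 : G))⁻¹ * ((σ p.1).2 : G),
                mul_mem (inv_mem (Subgroup.mem_inf.mp p.2.2).2) (σ p.1).2.2⟩)
  have hbij : Function.Bijective f := by
    constructor
    · rintro ⟨y, x⟩ ⟨y', x'⟩ h
      have h1 : ((σ y).1 : G) * (x : G) = ((σ y').1 : G) * (x' : G) :=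
        congrArg (fun q : A × B => (q.1 : G)) h
      have h2 : ((x : G))⁻¹ * ((σ y).2 : G) = ((x' : G))⁻¹ * ((σ y').2 : G) :=
        congrArg (fun q : A × B => (q.2 : G)) h
      have hyy : (y : G) = (y' : G) := by
        have := congrArg₂ (· * ·) h1 h2
        simpa [mul_assoc, hσ] using this
      have hy2 : y = y' := Subtype.ext hyy
      subst hy2
      exact Prod.ext rfl (Subtype.ext (mul_left_cancel h1))
    · rintro ⟨a, b⟩
      set y : ((A : Set G) * (B : Set G) : Set G) :=
        ⟨(a : G) * (b : G), Set.mul_mem_mul a.2 b.2⟩ with hy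
      have hprod : ((σ y).1 : G) * ((σ y).2 : G) = (a : G) * (b : G) := hσ y
      have hxB : ((σ y).1 : G)⁻¹ * (a : G) = ((σ y).2 : G) * ((b : G))⁻¹ := by
        calc ((σ y).1 : G)⁻¹ * (a : G)
            = ((σ y).1 : G)⁻¹ * (((a : G) * (b : G)) * ((b : G))⁻¹) := by group
          _ = ((σ y).1 : G)⁻¹ * ((((σ y).1 : G) * ((σ y).2 : G)) * ((b : G))⁻¹) := by
              rw [hprod]
          _ = ((σ y).2 : G) * ((b : G))⁻¹ := by group
      have hxmem : ((σ y).1 : G)⁻¹ * (a : G) ∈ A ⊓ B := by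
        refine Subgroup.mem_inf.mpr ⟨mul_mem (inv_mem (σ y).1.2) a.2, ?_⟩
        rw [hxB]; exact mul_mem (σ y).2.2 (inv_mem b.2)
      refine ⟨⟨y, ⟨((σ y).1 : G)⁻¹ * (a : G), hxmem⟩⟩, ?_⟩
      refine Prod.ext (Subtype.ext ?_) (Subtype.ext ?_)
      · show ((σ y).1 : G) * (((σ y).1 : G)⁻¹ * (a : G)) = (a : G)
        group
      · show (((σ y).1 : G)⁻¹ * (a : G))⁻¹ * ((σ y).2 : G) = (b : G)
        calc (((σ y).1 : G)⁻¹ * (a : G))⁻¹ * ((σ y).2 : G)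
            = ((a : G))⁻¹ * (((σ y).1 : G) * ((σ y).2 : G)) := by group
          _ = ((a : G))⁻¹ * ((a : G) * (b : G)) := by rw [hprod]
          _ = (b : G) := by group
  have := Nat.card_congr (Equiv.ofBijective f hbij)
  simpa [Nat.card_prod] using this

/-- Index version of the product formula. -/
lemma card_mulset_mul_index {G : Type*} [Group G] [Fintype G] (A B : Subgroup G) :
    Nat.card ((A : Set G) * (B : Set G) : Set G) * (A.index * B.index)
      = Nat.card G * (A ⊓ B).index := by
  have h1 := card_mulset_mul_card_inf A B
  have h2 := Subgroup.index_mul_card A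
  have h3 := Subgroup.index_mul_card B
  have h4 := Subgroup.index_mul_card (A ⊓ B)
  have hpos : 0 < Nat.card (A ⊓ B : Subgroup G) := Nat.card_pos
  apply Nat.eq_of_mul_eq_mul_right hpos
  calc Nat.card ((A : Set G) * (B : Set G) : Set G) * (A.index * B.index)
        * Nat.card (A ⊓ B : Subgroup G)
      = (Nat.card ((A : Set G) * (B : Set G) : Set G) * Nat.card (A ⊓ B : Subgroup G))
          * (A.index * B.index) := by ring
    _ = (Nat.card A * Nat.card B) * (A.index * B.index) := by rw [h1]
    _ = (A.index * Nat.card A) * (B.index * Nat.card B) := by ring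
    _ = Nat.card G * Nat.card G := by rw [h2, h3]
    _ = Nat.card G * ((A ⊓ B).index * Nat.card (A ⊓ B : Subgroup G)) := by rw [h4]
    _ = Nat.card G * (A ⊓ B).index * Nat.card (A ⊓ B : Subgroup G) := by ring

lemma alpha_spec {G : Type*} [Group G] [Fintype G] (A B : Subgroup G) :
    (A ⊓ B).index = Nat.lcm A.index B.index * alphaIdx A B := by
  have h1 : A.index ∣ (A ⊓ B).index := Subgroup.index_dvd_of_le inf_le_left
  have h2 : B.index ∣ (A ⊓ B).index := Subgroup.index_dvd_of_le inf_le_right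
  have h := Nat.lcm_dvd h1 h2
  rw [alphaIdx, Nat.mul_div_cancel' h]

theorem harmonic_triple_alpha_relations
    (G : Type*) [Group G] [Fintype G] (U V W : Subgroup G)
    (a ru rv rw : ℕ) (ha : 0 < a) (hru : 0 < ru) (hrv : 0 < rv) (hrw : 0 < rw)
    (hU : U.index = a * ru) (hV : V.index = a * rv) (hW : W.index = a * rw)
    (huv : Nat.Coprime ru rv) (huw : Nat.Coprime ru rw) (hvw : Nat.Coprime rv rw)
    (hharm : ∃ gu gv gw : G,
      Disjoint (gu • (U : Set G)) (gv • (V : Set G)) ∧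
      Disjoint (gu • (U : Set G)) (gw • (W : Set G)) ∧
      Disjoint (gv • (V : Set G)) (gw • (W : Set G)))
    (b : ℕ) (hb : alphaIdx U W = b) :
    (alphaIdx U V = 1 → b ≤ alphaIdx V W * Nat.gcd rv b) ∧
    (alphaIdx U V = 1 → b = alphaIdx V W * Nat.gcd rv b →
      Nat.card ((U : Set G) * (V : Set G) : Set G) +
        Nat.card ((V : Set G) * (W : Set G) : Set G) < Fintype.card G) ∧
    (alphaIdx U V = b → a * b * ru * rv * rw ∣ (U ⊓ V ⊓ W).index) := by
  classical
  set n := Nat.card G with hn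
  have hnpos : 0 < n := Nat.card_pos
  set αvw := alphaIdx V W with hαvw
  -- lcm computations
  have iUV : (U ⊓ V).index = a * (ru * rv) * alphaIdx U V := by
    rw [alpha_spec, hU, hV, Nat.lcm_mul_left, huv.lcm_eq_mul]
  have iUW : (U ⊓ W).index = a * (ru * rw) * b := by
    rw [alpha_spec, hU, hW, Nat.lcm_mul_left, huw.lcm_eq_mul, hb]
  have iVW : (V ⊓ W).index = a * (rv * rw) * αvw := by
    rw [alpha_spec, hV, hW, Nat.lcm_mul_left, hvw.lcm_eq_mul, hαvw]
  have dUV : (U ⊓ V).index ∣ (U ⊓ V ⊓ W).index :=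
    Subgroup.index_dvd_of_le inf_le_left
  have dUW : (U ⊓ W).index ∣ (U ⊓ V ⊓ W).index :=
    Subgroup.index_dvd_of_le (le_inf ((inf_le_left).trans inf_le_left) inf_le_right)
  have hNne : (U ⊓ V ⊓ W).index ≠ 0 := Subgroup.index_ne_zero_of_finite
  have hNpos : 0 < (U ⊓ V ⊓ W).index := Nat.pos_of_ne_zero hNne
  set N := (U ⊓ V ⊓ W).index with hNdef
  -- card of V*W
  have c2 := card_mulset_mul_index V W
  set cVW := Nat.card ((V : Set G) * (W : Set G) : Set G) with hcVWdef
  have hcVW : cVW * a = n * αvw := by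
    have hp : 0 < a * (rv * rw) := by positivity
    apply Nat.eq_of_mul_eq_mul_right hp
    calc cVW * a * (a * (rv * rw)) = cVW * (V.index * W.index) := by rw [hV, hW]; ring
      _ = n * (V ⊓ W).index := c2
      _ = n * αvw * (a * (rv * rw)) := by rw [iVW]; ring
  -- shared facts for (a) and (b), conditional on alphaIdx U V = 1
  have main : ∀ _ : alphaIdx U V = 1,
      (a * ru) * Nat.lcm rv (rw * b) ≤ a * ru * rv * rw * αvw ∧
      ((a * ru) * Nat.lcm rv (rw * b) = a * ru * rv * rw * αvw →
        Nat.card (((U ⊓ V : Subgroup G) : Set G) * (W : Set G) : Set G) = cVW) := by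
    intro h1
    have iUVeq : (U ⊓ V).index = a * (ru * rv) := by rw [iUV, h1, mul_one]
    set X := (((U ⊓ V : Subgroup G) : Set G) * (W : Set G) : Set G) with hXdef
    set cX := Nat.card X with hcXdef
    have c1 : cX * ((U ⊓ V).index * W.index) = n * N := card_mulset_mul_index (U ⊓ V) W
    have hXsub : X ⊆ ((V : Set G) * (W : Set G)) :=
      Set.mul_subset_mul_right (SetLike.coe_subset_coe.mpr inf_le_right)
    have hXle : cX ≤ cVW := Nat.card_mono (Set.toFinite _) hXsub
    have key : ∀ c ≤ cVW, c * ((U ⊓ V).index * W.index) = n * N →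
        n * a * N ≤ n * a * (a * ru * rv * rw * αvw) := by
      intro c hc hcc
      calc n * a * N = (n * N) * a := by ring
        _ = c * ((U ⊓ V).index * W.index) * a := by rw [hcc]
        _ = c * (a * (ru * rv) * (a * rw) * a) := by rw [iUVeq, hW]; ring
        _ ≤ cVW * (a * (ru * rv) * (a * rw) * a) :=
            Nat.mul_le_mul_right _ hc
        _ = (cVW * a) * (a * (ru * rv) * (a * rw)) := by ring
        _ = (n * αvw) * (a * (ru * rv) * (a * rw)) := by rw [hcVW]
        _ = n * a * (a * ru * rv * rw * αvw) := by ring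
    have hNle : N ≤ a * ru * rv * rw * αvw :=
      Nat.le_of_mul_le_mul_left (key cX hXle c1) (by positivity)
    -- lcm divides N
    have hmdvd : Nat.lcm ((U ⊓ V).index) ((U ⊓ W).index) ∣ N := Nat.lcm_dvd dUV dUW
    have e1 : (U ⊓ V).index = (a * ru) * rv := by rw [iUVeq]; ring
    have e2 : (U ⊓ W).index = (a * ru) * (rw * b) := by rw [iUW]; ring
    rw [e1, e2, Nat.lcm_mul_left] at hmdvd
    have hmleN : (a * ru) * Nat.lcm rv (rw * b) ≤ N := Nat.le_of_dvd hNpos hmdvd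
    refine ⟨le_trans hmleN hNle, ?_⟩
    intro heq
    -- equality case: N = a*ru*rv*rw*αvw and cX = cVW
    have hNge : a * ru * rv * rw * αvw ≤ N := heq ▸ hmleN
    have hNeq : N = a * ru * rv * rw * αvw := le_antisymm hNle hNge
    -- now cX * stuff = cVW * stuff
    have hKpos : 0 < a * (ru * rv) * (a * rw) * a := by positivity
    apply Nat.eq_of_mul_eq_mul_right hKpos
    calc cX * (a * (ru * rv) * (a * rw) * a)
        = cX * ((U ⊓ V).index * W.index) * a := by rw [iUVeq, hW]; ring
      _ = (n * N) * a := by rw [c1]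
      _ = (n * αvw) * (a * (ru * rv) * (a * rw)) := by rw [hNeq]; ring
      _ = (cVW * a) * (a * (ru * rv) * (a * rw)) := by rw [hcVW]
      _ = cVW * (a * (ru * rv) * (a * rw) * a) := by ring
  have hg : Nat.gcd rv (rw * b) = Nat.gcd rv b :=
    Nat.Coprime.gcd_mul_left_cancel_right b hvw.symm
  have hgl : (a * ru) * Nat.lcm rv (rw * b) * Nat.gcd rv b = a * ru * rv * rw * b := by
    rw [← hg, mul_assoc (a * ru), mul_comm (Nat.lcm rv (rw * b)), Nat.gcd_mul_lcm]
    ring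
  refine ⟨?_, ?_, ?_⟩
  · -- part (a)
    intro h1
    obtain ⟨hmle, -⟩ := main h1
    have hp : 0 < a * ru * rv * rw := by positivity
    apply Nat.le_of_mul_le_mul_left _ hp
    calc a * ru * rv * rw * b
        = (a * ru) * Nat.lcm rv (rw * b) * Nat.gcd rv b := hgl.symm
      _ ≤ a * ru * rv * rw * αvw * Nat.gcd rv b :=
          Nat.mul_le_mul_right _ hmle
      _ = a * ru * rv * rw * (αvw * Nat.gcd rv b) := by ring
  · -- part (b)
    intro h1 h2
    obtain ⟨hmle, hcardeq⟩ := main h1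
    have hgpos : 0 < Nat.gcd rv b := Nat.gcd_pos_of_pos_left b hrv
    have hmeq : (a * ru) * Nat.lcm rv (rw * b) = a * ru * rv * rw * αvw := by
      apply Nat.eq_of_mul_eq_mul_right hgpos
      calc (a * ru) * Nat.lcm rv (rw * b) * Nat.gcd rv b
          = a * ru * rv * rw * b := hgl
        _ = a * ru * rv * rw * (αvw * Nat.gcd rv b) := by rw [← h2]
        _ = a * ru * rv * rw * αvw * Nat.gcd rv b := by ring
    have hcard := hcardeq hmeq
    -- set equality (U⊓V)W = VW
    have hXsub : (((U ⊓ V : Subgroup G) : Set G) * (W : Set G)) ⊆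
        ((V : Set G) * (W : Set G)) :=
      Set.mul_subset_mul_right (SetLike.coe_subset_coe.mpr inf_le_right)
    have hsetX : (((U ⊓ V : Subgroup G) : Set G) * (W : Set G)) =
        ((V : Set G) * (W : Set G)) := by
      apply Set.eq_of_subset_of_ncard_le hXsub
      rw [← Nat.card_coe_set_eq, ← Nat.card_coe_set_eq, hcard]
    -- W*V = W*(U⊓V)
    have hWV : ((W : Set G) * (V : Set G)) = ((W : Set G) * ((U ⊓ V : Subgroup G) : Set G)) := by
      have := congrArg (fun s : Set G => s⁻¹) hsetX
      simpa [mul_inv_rev, inv_coe_set] using this.symm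
    obtain ⟨gu, gv, gw, d1, d2, d3⟩ := hharm
    -- three pairwise disjoint sets
    set S1 : Set G := gu • ((U : Set G) * (V : Set G)) with hS1
    set S2 : Set G := gw • ((W : Set G) * (V : Set G)) with hS2
    set S3 : Set G := gv • (V : Set G) with hS3
    have D13 : Disjoint S1 S3 := by
      rw [Set.disjoint_left]
      rintro x ⟨y, hy, rfl⟩ ⟨v', hv', hx⟩
      rw [Set.mem_mul] at hy
      obtain ⟨u, hu, v, hv, rfl⟩ := hy
      have hx' : gu * (u * v) = gv * v' := by simpa [smul_eq_mul] using hx.symm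
      have m1 : gu * u ∈ gu • (U : Set G) := ⟨u, hu, rfl⟩
      have m2 : gu * u ∈ gv • (V : Set G) := by
        refine ⟨v' * v⁻¹, mul_mem hv' (inv_mem hv), ?_⟩
        show gv * (v' * v⁻¹) = gu * u
        calc gv * (v' * v⁻¹) = (gv * v') * v⁻¹ := by group
          _ = (gu * (u * v)) * v⁻¹ := by rw [hx']
          _ = gu * u := by group
      exact Set.disjoint_left.mp d1 m1 m2
    have D23 : Disjoint S2 S3 := by
      rw [Set.disjoint_left]
      rintro x ⟨y, hy, rfl⟩ ⟨v', hv', hx⟩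
      rw [Set.mem_mul] at hy
      obtain ⟨w, hw, v, hv, rfl⟩ := hy
      have hx' : gw * (w * v) = gv * v' := by simpa [smul_eq_mul] using hx.symm
      have m1 : gw * w ∈ gw • (W : Set G) := ⟨w, hw, rfl⟩
      have m2 : gw * w ∈ gv • (V : Set G) := by
        refine ⟨v' * v⁻¹, mul_mem hv' (inv_mem hv), ?_⟩
        show gv * (v' * v⁻¹) = gw * w
        calc gv * (v' * v⁻¹) = (gv * v') * v⁻¹ := by group
          _ = (gw * (w * v)) * v⁻¹ := by rw [hx']
          _ = gw * w := by group
      exact Set.disjoint_left.mp d3 m2 m1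
    have D12 : Disjoint S1 S2 := by
      rw [Set.disjoint_left]
      rintro x ⟨y, hy, rfl⟩ ⟨z, hz, hx⟩
      rw [Set.mem_mul] at hy hz
      obtain ⟨u, hu, v, hv, rfl⟩ := hy
      obtain ⟨w, hw, v', hv', rfl⟩ := hz
      -- gu * (u*v) = gw * (w*v')
      have hx' : gu * (u * v) = gw * (w * v') := by simpa [smul_eq_mul] using hx.symm
      -- w * (v' * v⁻¹) ∈ W * V = W * (U⊓V)
      have hmem : w * (v' * v⁻¹) ∈ ((W : Set G) * ((U ⊓ V : Subgroup G) : Set G)) := by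
        rw [← hWV]
        exact Set.mul_mem_mul hw (mul_mem hv' (inv_mem hv))
      rw [Set.mem_mul] at hmem
      obtain ⟨w2, hw2, y, hy2, heq2⟩ := hmem
      -- gu * (u * y⁻¹) = gw * w2
      have m1 : gu * (u * y⁻¹) ∈ gu • (U : Set G) :=
        ⟨u * y⁻¹, mul_mem hu (inv_mem (Subgroup.mem_inf.mp hy2).1), rfl⟩
      have m2 : gu * (u * y⁻¹) ∈ gw • (W : Set G) := by
        refine ⟨w2, hw2, ?_⟩
        show gw * w2 = gu * (u * y⁻¹)
        calc gw * w2 = gw * ((w2 * y) * y⁻¹) := by group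
          _ = gw * ((w * (v' * v⁻¹)) * y⁻¹) := by rw [heq2]
          _ = (gw * (w * v')) * v⁻¹ * y⁻¹ := by group
          _ = (gu * (u * v)) * v⁻¹ * y⁻¹ := by rw [hx']
          _ = gu * (u * y⁻¹) := by group
      exact Set.disjoint_left.mp d2 m1 m2
    -- counting
    have hc1 : S1.ncard = Nat.card ((U : Set G) * (V : Set G) : Set G) := by
      rw [hS1, Set.ncard_smul_set, Nat.card_coe_set_eq]
    have hinv : (((V : Set G) * (W : Set G)) : Set G)⁻¹ = (W : Set G) * (V : Set G) := by
      rw [mul_inv_rev, inv_coe_set, inv_coe_set]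
    have hc2 : S2.ncard = cVW := by
      rw [hS2, Set.ncard_smul_set, hcVWdef, Nat.card_coe_set_eq, ← hinv, Set.ncard_inv]
    have hc3 : S3.ncard = Nat.card V := by
      rw [hS3, Set.ncard_smul_set, ← Nat.card_coe_set_eq]
      simp
    have hVpos : 0 < Nat.card V := Nat.card_pos
    have hunion : (S1 ∪ S2 ∪ S3).ncard ≤ n := by
      have huniv : (Set.univ : Set G).ncard = n := by rw [Set.ncard_univ, hn]
      rw [← huniv]
      exact Set.ncard_le_ncard (Set.subset_univ _) (Set.toFinite _)
    have hsum : S1.ncard + S2.ncard + S3.ncard = (S1 ∪ S2 ∪ S3).ncard := by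
      rw [Set.ncard_union_eq (Set.disjoint_union_left.mpr ⟨D13, D23⟩),
        Set.ncard_union_eq D12]
    have hfin : Fintype.card G = n := by rw [hn]; exact Nat.card_eq_fintype_card.symm
    rw [hfin]
    omega
  · -- part (c)
    intro h1
    have e1 : (U ⊓ V).index = (a * ru * b) * rv := by rw [iUV, h1]; ring
    have e2 : (U ⊓ W).index = (a * ru * b) * rw := by rw [iUW]; ring
    have hdvd : Nat.lcm ((U ⊓ V).index) ((U ⊓ W).index) ∣ N := Nat.lcm_dvd dUV dUW
    rw [e1, e2, Nat.lcm_mul_left, hvw.lcm_eq_mul] at hdvd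
    have : a * b * ru * rv * rw = a * ru * b * (rv * rw) := by ring
    rw [hNdef] at hdvd
    rw [this]
    exact hdvd
end

section
/- Let G be a finite group and let U, V, W be subgroups of G with [G:U] = a·r_u, [G:V] = a·r_v, [G:W] = a·r_w, where a, r_u, r_v, r_w are positive integers and r_u, r_v, r_w are pairwise coprime. Assume that α(U,V) = 1, that α(U,W) = α(V,W), and that |UV| + |VW| ≥ |G|. Then the triple (U, V, W) is not harmonic; i.e. there do not exist g_u, g_v, g_w ∈ G such that the cosets g_uU, g_vV, g_wW are pairwise disjoint. -/
open scoped Pointwise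

/-!
Translating by `gu⁻¹`, the three cosets become `U`, `x V`, `y W` with `x ∉ UV`, `y ∉ UW` and
`x⁻¹ y ∉ VW`. The index hypotheses make `[G : U ∩ V ∩ W]` divisible by
`lcm([G : U ∩ W], [G : V ∩ W]) = [G : U ∩ V] · [V : V ∩ W]`, so `U ∩ V` acts transitively
on `V / (V ∩ W)` and `V ⊆ UW`. Then `UV`, `y WV` and `x V` are pairwise disjoint, whence
`|UV| + |VW| + |V| ≤ |G|`.
-/

theorem Set.disjoint_smul_set_iff_notMem_mul_inv {G : Type*} [Group G] {a : G} {s t : Set G} :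
    Disjoint (a • s) t ↔ a ∉ t * s⁻¹ := by
  rw [← not_iff_not, not_not, Set.not_disjoint_iff]
  constructor
  · rintro ⟨_, ⟨b, hb, rfl⟩, hab⟩
    exact ⟨a * b, hab, b⁻¹, by simpa using hb, mul_inv_cancel_right a b⟩
  · rintro ⟨c, hc, b, hb, rfl⟩
    exact ⟨c, ⟨b⁻¹, hb, mul_inv_cancel_right c b⟩, hc⟩

namespace Subgroup

variable {G : Type*} [Group G]

theorem coe_subset_mul_of_relIndex_le {H K L : Subgroup G} (hKL : K ≤ L)
    (hL : H.relIndex L ≠ 0) (h : H.relIndex L ≤ H.relIndex K) : (L : Set G) ⊆ K * H := by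
  have : Finite (L ⧸ H.subgroupOf L) := Nat.finite_of_card_ne_zero hL
  have hsurj := ((quotientSubgroupOfEmbeddingOfLE H hKL).injective.bijective_of_nat_card_le h).2
  intro l hl
  obtain ⟨k, hk⟩ := hsurj (QuotientGroup.mk ⟨l, hl⟩)
  induction k using QuotientGroup.induction_on with | H k => ?_
  rw [quotientSubgroupOfEmbeddingOfLE_apply_mk, QuotientGroup.eq, mem_subgroupOf] at hk
  exact ⟨k, k.2, _, hk, mul_inv_cancel_left (k : G) l⟩

theorem index_inf_eq_lcm_mul_alphaIdx (A B : Subgroup G) :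
    (A ⊓ B).index = Nat.lcm A.index B.index * alphaIdx A B :=
  (Nat.mul_div_cancel' (Nat.lcm_dvd (index_dvd_of_le inf_le_left)
    (index_dvd_of_le inf_le_right))).symm

theorem index_inf_eq_mul_lcm_mul_alphaIdx {A B : Subgroup G} {a r s : ℕ}
    (hA : A.index = a * r) (hB : B.index = a * s) :
    (A ⊓ B).index = a * Nat.lcm r s * alphaIdx A B := by
  rw [index_inf_eq_lcm_mul_alphaIdx, hA, hB, Nat.lcm_mul_left]

theorem relIndex_mul_index_eq_index_inf_s13 (H K : Subgroup G) :
    H.relIndex K * K.index = (H ⊓ K).index := by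
  rw [← inf_relIndex_right, relIndex_mul_index inf_le_right]

theorem disjoint_smul_coe_iff {A B : Subgroup G} {g h : G} :
    Disjoint (g • (A : Set G)) (h • (B : Set G)) ↔ g⁻¹ * h ∉ (A : Set G) * B := by
  rw [disjoint_comm, Set.disjoint_smul_set_right, smul_smul,
    Set.disjoint_smul_set_iff_notMem_mul_inv, inv_coe_set]

theorem card_mul_add_card_mul_lt_card [Finite G] {U V W : Subgroup G}
    (hV : (V : Set G) ⊆ U * W) {x y : G} (hx : x ∉ (U : Set G) * V)
    (hy : y ∉ (U : Set G) * W) (hxy : x⁻¹ * y ∉ (V : Set G) * W) :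
    Nat.card ((U : Set G) * V : Set G) + Nat.card ((V : Set G) * W : Set G) < Nat.card G := by
  have hWV : ((W : Set G) * V)⁻¹ = V * W := by rw [mul_inv_rev, inv_coe_set, inv_coe_set]
  have hUV : Disjoint (x • (V : Set G)) (U * V) := by
    rwa [Set.disjoint_smul_set_iff_notMem_mul_inv, inv_coe_set, mul_assoc, coe_mul_coe]
  have hUW : Disjoint (y • ((W : Set G) * V)) (U * V) := by
    have hUVW : (U : Set G) * V * ((W : Set G) * V)⁻¹ ⊆ U * W :=
      calc (U : Set G) * V * ((W : Set G) * V)⁻¹ = U * V * W := by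
            rw [hWV, ← mul_assoc, mul_assoc (U : Set G), coe_mul_coe]
        _ ⊆ U * (U * W) * W := by gcongr
        _ = U * W := by rw [← mul_assoc, coe_mul_coe, mul_assoc, coe_mul_coe]
    exact Set.disjoint_smul_set_iff_notMem_mul_inv.2 fun h => hy (hUVW h)
  have hVW : Disjoint (y • ((W : Set G) * V)) (x • (V : Set G)) := by
    rwa [Set.disjoint_smul_set_right, smul_smul, Set.disjoint_smul_set_iff_notMem_mul_inv, hWV,
      ← mul_assoc, coe_mul_coe]
  have hcover := Set.ncard_le_ncard (Set.subset_univ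
    ((U : Set G) * (V : Set G) ∪ y • ((W : Set G) * (V : Set G)) ∪ x • (V : Set G)))
  rw [Set.ncard_union_eq (hUV.symm.union_left hVW), Set.ncard_union_eq hUW.symm,
    Set.ncard_smul_set, Set.ncard_smul_set, ← Set.ncard_inv ((W : Set G) * (V : Set G)), hWV,
    Set.ncard_univ] at hcover
  have hV1 : 0 < (V : Set G).ncard := (Set.ncard_pos).2 ⟨1, V.one_mem⟩
  simp only [Nat.card_coe_set_eq]
  omega

theorem coe_subset_mul_of_coprime_index [Finite G] {U V W : Subgroup G} {a ru rv rw : ℕ}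
    (hU : U.index = a * ru) (hV : V.index = a * rv) (hW : W.index = a * rw)
    (huv : Nat.Coprime ru rv) (huw : Nat.Coprime ru rw) (hvw : Nat.Coprime rv rw)
    (hUV : alphaIdx U V = 1) (heq : alphaIdx U W = alphaIdx V W) :
    (V : Set G) ⊆ U * W := by
  set t := alphaIdx V W
  have hUVi : (U ⊓ V).index = a * (ru * rv) := by
    rw [index_inf_eq_mul_lcm_mul_alphaIdx hU hV, hUV, huv.lcm_eq_mul, mul_one]
  have hUWi : (U ⊓ W).index = rw * t * (a * ru) := by
    rw [index_inf_eq_mul_lcm_mul_alphaIdx hU hW, heq, huw.lcm_eq_mul]; ring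
  have hVWi : (V ⊓ W).index = rw * t * (a * rv) := by
    rw [index_inf_eq_mul_lcm_mul_alphaIdx hV hW, hvw.lcm_eq_mul]; ring
  have hUVW : a * (ru * rv) * (rw * t) ∣ (W ⊓ (U ⊓ V)).index := by
    have hlcm : Nat.lcm (U ⊓ W).index (V ⊓ W).index = a * (ru * rv) * (rw * t) := by
      rw [hUWi, hVWi, Nat.lcm_mul_left, Nat.lcm_mul_left, huv.lcm_eq_mul]; ring
    exact hlcm ▸ Nat.lcm_dvd
      (index_dvd_of_le (le_inf (inf_le_right.trans inf_le_left) inf_le_left))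
      (index_dvd_of_le (le_inf (inf_le_right.trans inf_le_right) inf_le_left))
  have hWV : W.relIndex V = rw * t := by
    have h := relIndex_mul_index_eq_index_inf_s13 W V
    rw [inf_comm, hVWi, hV] at h
    exact Nat.eq_of_mul_eq_mul_right (Nat.pos_of_ne_zero (hV ▸ V.index_ne_zero_of_finite)) h
  have hrel : W.relIndex V ≤ W.relIndex (U ⊓ V) := by
    refine Nat.le_of_mul_le_mul_right ?_ (Nat.pos_of_ne_zero (U ⊓ V).index_ne_zero_of_finite)
    rw [hWV, relIndex_mul_index_eq_index_inf_s13, hUVi, mul_comm]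
    exact Nat.le_of_dvd (Nat.pos_of_ne_zero index_ne_zero_of_finite) hUVW
  calc (V : Set G) ⊆ ↑(U ⊓ V) * W :=
        coe_subset_mul_of_relIndex_le inf_le_right (W.subgroupOf V).index_ne_zero_of_finite hrel
    _ ⊆ U * W := Set.mul_subset_mul_right (SetLike.coe_subset_coe.2 inf_le_left)

end Subgroup

theorem not_harmonic_one_small_two_big_general
    (G : Type*) [Group G] [Fintype G] (U V W : Subgroup G)
    (a ru rv rw : ℕ)
    (hU : U.index = a * ru) (hV : V.index = a * rv) (hW : W.index = a * rw)
    (huv : Nat.Coprime ru rv) (huw : Nat.Coprime ru rw) (hvw : Nat.Coprime rv rw)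
    (hUV : alphaIdx U V = 1) (heq : alphaIdx U W = alphaIdx V W)
    (hcard : Fintype.card G ≤
      Nat.card ((U : Set G) * (V : Set G) : Set G) +
      Nat.card ((V : Set G) * (W : Set G) : Set G)) :
    ¬ ∃ gu gv gw : G,
      Disjoint (gu • (U : Set G)) (gv • (V : Set G)) ∧
      Disjoint (gu • (U : Set G)) (gw • (W : Set G)) ∧
      Disjoint (gv • (V : Set G)) (gw • (W : Set G)) := by
  rintro ⟨gu, gv, gw, hx, hy, hxy⟩
  rw [Subgroup.disjoint_smul_coe_iff] at hx hy hxy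
  have htranslate : (gu⁻¹ * gv)⁻¹ * (gu⁻¹ * gw) = gv⁻¹ * gw := by group
  have hVUW := Subgroup.coe_subset_mul_of_coprime_index hU hV hW huv huw hvw hUV heq
  have hlt := Subgroup.card_mul_add_card_mul_lt_card hVUW hx hy (htranslate ▸ hxy)
  rw [← Nat.card_eq_fintype_card] at hcard
  omega

theorem not_harmonic_one_small_two_big
    (G : Type*) [Group G] [Fintype G] (U V W : Subgroup G)
    (a ru rv rw : ℕ) (ha : 0 < a) (hru : 0 < ru) (hrv : 0 < rv) (hrw : 0 < rw)
    (hU : U.index = a * ru) (hV : V.index = a * rv) (hW : W.index = a * rw)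
    (huv : Nat.Coprime ru rv) (huw : Nat.Coprime ru rw) (hvw : Nat.Coprime rv rw)
    (hUV : alphaIdx U V = 1) (heq : alphaIdx U W = alphaIdx V W)
    (hcard : Fintype.card G ≤
      Nat.card ((U : Set G) * (V : Set G) : Set G) +
      Nat.card ((V : Set G) * (W : Set G) : Set G)) :
    ¬ ∃ gu gv gw : G,
      Disjoint (gu • (U : Set G)) (gv • (V : Set G)) ∧
      Disjoint (gu • (U : Set G)) (gw • (W : Set G)) ∧
      Disjoint (gv • (V : Set G)) (gw • (W : Set G)) :=
  not_harmonic_one_small_two_big_general G U V W a ru rv rw hU hV hW huv huw hvw hUV heq hcard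
end

section
/- Let G be a finite group and let U_1, U_2 be subgroups of G such that the pair (U_1, U_2) is harmonic, with [G:U_1] = 2r_1 and [G:U_2] = 2r_2, where r_1, r_2 are coprime positive integers. Then α(U_1, U_2) = 1; moreover |U_1U_2| = |G|/2 and [G : U_1 ∩ U_2] = 2r_1r_2. -/
/-!
Counting the set `H * K` by its left `K`-cosets gives
`|H K| · [G : H] · [G : K] = |G| · [G : H ⊓ K]`; dividing by `lcm([G : H], [G : K])` this becomes
`|H K| · gcd([G : H], [G : K]) = |G| · α(H, K)`. Disjoint cosets `g₁ H` and `g₂ K` mean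
`g₁⁻¹ g₂ ∉ H K`, so `|H K| < |G|`, and when the gcd is `2` this leaves only `α(H, K) = 1`.
-/

open scoped Pointwise

namespace Subgroup

variable {G : Type*} [Group G] (H K : Subgroup G)

theorem ncard_image_mk_eq_relIndex :
    ((H : Set G).image ((↑) : G → G ⧸ K)).ncard = K.relIndex H := by
  have hsmul (h : H) : h • ((1 : G) : G ⧸ K) = (h : G) := congrArg _ (mul_one _)
  have horbit : MulAction.orbit H ((1 : G) : G ⧸ K) = (H : Set G).image ((↑) : G → G ⧸ K) := by
    ext x
    simp [MulAction.mem_orbit_iff, hsmul]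
  have hstab : MulAction.stabilizer H ((1 : G) : G ⧸ K) = K.subgroupOf H := by
    ext h
    simp [MulAction.mem_stabilizer_iff, hsmul, mem_subgroupOf, QuotientGroup.eq]
  rw [relIndex, ← hstab, MulAction.index_stabilizer, horbit]

theorem card_mul_mul_index_mul_index_s14 :
    Nat.card ((H : Set G) * K : Set G) * H.index * K.index = Nat.card G * (H ⊓ K).index := by
  rw [card_mul_eq_card_subgroup_mul_card_quotient, Nat.card_coe_set_eq,
    ncard_image_mk_eq_relIndex, ← inf_relIndex_right, inf_comm,
    mul_assoc (Nat.card K), relIndex_mul_index inf_le_left, mul_comm, ← mul_assoc,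
    index_mul_card]

theorem lcm_index_mul_alphaIdx : Nat.lcm H.index K.index * alphaIdx H K = (H ⊓ K).index :=
  Nat.mul_div_cancel' (Nat.lcm_dvd (index_dvd_of_le inf_le_left) (index_dvd_of_le inf_le_right))

theorem card_mul_mul_gcd_index [Finite G] :
    Nat.card ((H : Set G) * K : Set G) * Nat.gcd H.index K.index = Nat.card G * alphaIdx H K := by
  have hlcm : Nat.lcm H.index K.index ≠ 0 :=
    Nat.lcm_ne_zero index_ne_zero_of_finite index_ne_zero_of_finite
  apply Nat.eq_of_mul_eq_mul_right (Nat.pos_of_ne_zero hlcm)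
  rw [mul_assoc, Nat.gcd_mul_lcm, ← mul_assoc, card_mul_mul_index_mul_index_s14, mul_assoc,
    mul_comm (alphaIdx H K), lcm_index_mul_alphaIdx]

theorem inv_mul_notMem_mul_of_disjoint_smul {g₁ g₂ : G}
    (h : Disjoint (g₁ • (H : Set G)) (g₂ • (K : Set G))) : g₁⁻¹ * g₂ ∉ (H : Set G) * K := by
  rintro ⟨x, hx, y, hy, hxy : x * y = g₁⁻¹ * g₂⟩
  rw [eq_inv_mul_iff_mul_eq] at hxy
  refine Set.disjoint_left.mp h (Set.smul_mem_smul_set hx) ⟨y⁻¹, inv_mem hy, ?_⟩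
  show g₂ * y⁻¹ = g₁ * x
  rw [← hxy, ← mul_assoc, mul_inv_cancel_right]

theorem alphaIdx_eq_one_of_disjoint_smul [Finite G] {g₁ g₂ : G}
    (h : Disjoint (g₁ • (H : Set G)) (g₂ • (K : Set G))) (hgcd : Nat.gcd H.index K.index = 2) :
    alphaIdx H K = 1 ∧ Nat.card ((H : Set G) * K : Set G) = Nat.card G / 2 := by
  have hcard := card_mul_mul_gcd_index H K
  rw [hgcd] at hcard
  have hlt : Nat.card ((H : Set G) * K : Set G) < Nat.card G :=
    Finite.card_subtype_lt (inv_mul_notMem_mul_of_disjoint_smul H K h)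
  have hα : alphaIdx H K ≠ 0 := fun h0 =>
    index_ne_zero_of_finite (H := H ⊓ K) (by rw [← lcm_index_mul_alphaIdx, h0, mul_zero])
  have hα1 : alphaIdx H K < 2 := by
    refine Nat.lt_of_mul_lt_mul_left (a := Nat.card G) ?_
    rw [← hcard]
    omega
  have hα_eq : alphaIdx H K = 1 := by omega
  rw [hα_eq, mul_one] at hcard
  exact ⟨hα_eq, by omega⟩

end Subgroup

theorem harmonic_pair_gcd_two_general
    (G : Type*) [Group G] [Fintype G] (U₁ U₂ : Subgroup G)
    (r₁ r₂ : ℕ) (hcop : Nat.Coprime r₁ r₂)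
    (hU₁ : U₁.index = 2 * r₁) (hU₂ : U₂.index = 2 * r₂)
    (hharm : ∃ g₁ g₂ : G, Disjoint (g₁ • (U₁ : Set G)) (g₂ • (U₂ : Set G))) :
    alphaIdx U₁ U₂ = 1 ∧
    Nat.card ((U₁ : Set G) * (U₂ : Set G) : Set G) = Fintype.card G / 2 ∧
    (U₁ ⊓ U₂).index = 2 * r₁ * r₂ := by
  obtain ⟨g₁, g₂, hdisj⟩ := hharm
  have hgcd : Nat.gcd U₁.index U₂.index = 2 := by
    rw [hU₁, hU₂, Nat.gcd_mul_left, hcop, mul_one]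
  obtain ⟨hα, hcard⟩ := U₁.alphaIdx_eq_one_of_disjoint_smul U₂ hdisj hgcd
  refine ⟨hα, Nat.card_eq_fintype_card (α := G) ▸ hcard, ?_⟩
  rw [← U₁.lcm_index_mul_alphaIdx, hα, mul_one, hU₁, hU₂, Nat.lcm_mul_left, hcop.lcm_eq_mul,
    mul_assoc]

theorem harmonic_pair_gcd_two
    (G : Type*) [Group G] [Fintype G] (U₁ U₂ : Subgroup G)
    (r₁ r₂ : ℕ) (hr₁ : 0 < r₁) (hr₂ : 0 < r₂) (hcop : Nat.Coprime r₁ r₂)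
    (hU₁ : U₁.index = 2 * r₁) (hU₂ : U₂.index = 2 * r₂)
    (hharm : ∃ g₁ g₂ : G, Disjoint (g₁ • (U₁ : Set G)) (g₂ • (U₂ : Set G))) :
    alphaIdx U₁ U₂ = 1 ∧
    Nat.card ((U₁ : Set G) * (U₂ : Set G) : Set G) = Fintype.card G / 2 ∧
    (U₁ ⊓ U₂).index = 2 * r₁ * r₂ :=
  harmonic_pair_gcd_two_general G U₁ U₂ r₁ r₂ hcop hU₁ hU₂ hharm
end

section
/- Let G be a finite group and let U_1, U_2, U_3 be subgroups of G with [G:U_1] = 2r_1 and [G:U_i] = 4r_i for i = 2, 3, where r_1, r_2, r_3 are pairwise coprime positive integers and r_1 is odd. Assume the triple (U_1, U_2, U_3) is harmonic. Then: (1) α(U_2, U_3) ≠ 2; and (2) if α(U_2, U_3) = 3, then 3 divides r_1 and |U_2(U_1 ∩ U_3)| = |U_2U_1 ∩ U_2U_3| = |G|/4. -/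
open scoped Pointwise

/-!
The product formula `|AB| · [G:A][G:B] = |G| · [G:A ⊓ B]` becomes
`|AB| · gcd([G:A],[G:B]) = |G| · α(A,B)`, and for a double coset `AxB = (A · xBx⁻¹)x` it gives
`|G| ≤ |AxB| · gcd([G:A],[G:B])`. In particular, if the gcd is `2` and `AB ≠ G`, then
`|AB| = |G|/2` and `α(A,B) = 1`.

Translating the harmonic cosets by `g₁⁻¹` turns harmonicity into `a ∉ U₁U₂`, `b ∉ U₁U₃` and
`a⁻¹b ∉ U₂U₃`, where `a = g₁⁻¹g₂` and `b = g₁⁻¹g₃`. If `α = α(U₂,U₃) ≥ 2` is prime to `r₁`, the same applies to `U₁(U₂ ⊓ U₃)`, so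
`U₁U₂ = U₁(U₂ ⊓ U₃) = U₁U₃ =: E`. Then `E · U₂U₃ = E`, so `E` and `a · U₂U₃` are disjoint,
both miss `b`, and yet `|E| + |U₂U₃| ≥ |G|/2 + α|G|/4 ≥ |G|`. This excludes `α = 2`, and
`α = 3` unless `3 ∣ r₁`.

For `α = 3` the complements of `U₂U₁` and `U₂U₃` are the double cosets `U₂a⁻¹U₁` and
`U₂a⁻¹bU₃`, of sizes `|G|/2` and `|G|/4`. Counting once more,
`aU₂a⁻¹ · bU₃ = (aU₂a⁻¹ ⊓ U₁) · bU₃ ⊆ U₁bU₃`, which misses `U₁`; this keeps the two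
complements apart, so `U₂U₁ ∪ U₂U₃ = G`. Inclusion–exclusion then gives
`|U₂U₁ ∩ U₂U₃| = |G|/4`, and `U₂(U₁ ⊓ U₃)`, of size at least `|G|/4`, fills this intersection.
-/

theorem Nat.gcd_two_mul_four_mul {r m : ℕ} (h : r.Coprime (2 * m)) :
    Nat.gcd (2 * r) (4 * m) = 2 := by
  rw [show 4 * m = 2 * (2 * m) by ring, Nat.gcd_mul_left, h.gcd_eq_one]

theorem Nat.lcm_two_mul_four_mul {r m : ℕ} (h : r.Coprime (2 * m)) :
    Nat.lcm (2 * r) (4 * m) = 4 * (r * m) := by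
  rw [show 4 * m = 2 * (2 * m) by ring, Nat.lcm_mul_left, h.lcm_eq_mul]
  ring

theorem Nat.gcd_four_mul_four_mul {m k : ℕ} (h : m.Coprime k) :
    Nat.gcd (4 * m) (4 * k) = 4 := by
  rw [Nat.gcd_mul_left, h.gcd_eq_one, mul_one]

theorem Nat.lcm_four_mul_four_mul {m k : ℕ} (h : m.Coprime k) :
    Nat.lcm (4 * m) (4 * k) = 4 * (m * k) := by
  rw [Nat.lcm_mul_left, h.lcm_eq_mul]

namespace Subgroup

variable {G : Type*} [Group G]

theorem ncard_mul_mul_index_mul_index [Finite G] (A B : Subgroup G) :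
    ((A : Set G) * B).ncard * (A.index * B.index) = Nat.card G * (A ⊓ B).index := by
  have hsmul (a : A) : a • ((1 : G) : G ⧸ B) = ((a : G) : G ⧸ B) := by
    change (((a : G) * 1 : G) : G ⧸ B) = _
    rw [mul_one]
  have hcard : ((A : Set G) * B).ncard
      = Nat.card B * (MulAction.orbit A ((1 : G) : G ⧸ B)).ncard := by
    rw [← Nat.card_coe_set_eq, card_mul_eq_card_subgroup_mul_card_quotient,
      Nat.card_coe_set_eq]
    congr 2
    ext q
    simp [MulAction.mem_orbit_iff, hsmul]
  have horbit : (MulAction.orbit A ((1 : G) : G ⧸ B)).ncard = B.relIndex A := by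
    rw [← MulAction.index_stabilizer]
    congr 1
    ext a
    simp [MulAction.mem_stabilizer_iff, hsmul, QuotientGroup.eq, mem_subgroupOf]
  calc ((A : Set G) * B).ncard * (A.index * B.index)
      = (Nat.card B * B.index) * ((B ⊓ A).relIndex A * A.index) := by
        rw [hcard, horbit, inf_relIndex_right]; ring
    _ = Nat.card G * (A ⊓ B).index := by
        rw [card_mul_index, relIndex_mul_index inf_le_right, inf_comm]

theorem alphaIdx_pos [Finite G] (A B : Subgroup G) : 0 < alphaIdx A B :=
  Nat.pos_of_ne_zero fun h => (A ⊓ B).index_ne_zero_of_finite (by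
    rw [index_inf_eq_lcm_mul_alphaIdx, h, mul_zero])

theorem ncard_mul_mul_gcd_index [Finite G] (A B : Subgroup G) :
    ((A : Set G) * B).ncard * Nat.gcd A.index B.index = Nat.card G * alphaIdx A B := by
  refine Nat.eq_of_mul_eq_mul_right (Nat.lcm_pos (Nat.pos_of_ne_zero A.index_ne_zero_of_finite)
    (Nat.pos_of_ne_zero B.index_ne_zero_of_finite)) ?_
  rw [mul_assoc, Nat.gcd_mul_lcm, ncard_mul_mul_index_mul_index, index_inf_eq_lcm_mul_alphaIdx]
  ring

theorem coe_conj_smul (x : G) (B : Subgroup G) :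
    ((MulAut.conj x • B : Subgroup G) : Set G) = MulOpposite.op x⁻¹ • x • (B : Set G) := by
  ext y
  simp [Set.mem_smul_set_iff_inv_smul_mem, mul_assoc]

theorem index_conj_smul (x : G) (B : Subgroup G) : (MulAut.conj x • B).index = B.index := by
  rw [pointwise_smul_def]
  exact index_map_of_bijective (MulAction.bijective _) _

theorem card_le_ncard_mul_smul_mul_gcd_index [Finite G] (A B : Subgroup G) (x : G) :
    Nat.card G ≤ ((A : Set G) * (x • (B : Set G))).ncard * Nat.gcd A.index B.index := by
  have hx : (A : Set G) * (x • (B : Set G))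
      = MulOpposite.op x • ((A : Set G) * ↑(MulAut.conj x • B)) := by
    rw [coe_conj_smul, ← mul_smul_comm, smul_smul, ← MulOpposite.op_mul, inv_mul_cancel,
      MulOpposite.op_one, one_smul]
  rw [hx, Set.ncard_smul_set, ← index_conj_smul x B, ncard_mul_mul_gcd_index]
  exact Nat.le_mul_of_pos_right _ (alphaIdx_pos _ _)

theorem alphaIdx_eq_one_of_notMem_mul [Finite G] {A B : Subgroup G} {x : G}
    (hx : x ∉ (A : Set G) * B) (hAB : Nat.gcd A.index B.index ≤ 2) : alphaIdx A B = 1 := by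
  have hlt : ((A : Set G) * B).ncard < Nat.card G :=
    Set.ncard_lt_card fun h => hx (h ▸ Set.mem_univ x)
  have hα := alphaIdx_pos A B
  by_contra hne
  refine lt_irrefl (Nat.card G * 2) ?_
  calc Nat.card G * 2 ≤ Nat.card G * alphaIdx A B := Nat.mul_le_mul_left _ (by omega)
    _ = ((A : Set G) * B).ncard * Nat.gcd A.index B.index := (ncard_mul_mul_gcd_index A B).symm
    _ ≤ ((A : Set G) * B).ncard * 2 := Nat.mul_le_mul_left _ hAB
    _ < Nat.card G * 2 := by omega

theorem two_mul_ncard_mul_eq_card [Finite G] {A B : Subgroup G} {x : G}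
    (hx : x ∉ (A : Set G) * B) (hAB : Nat.gcd A.index B.index = 2) :
    2 * ((A : Set G) * B).ncard = Nat.card G := by
  have h := ncard_mul_mul_gcd_index A B
  rw [hAB, alphaIdx_eq_one_of_notMem_mul hx hAB.le] at h
  omega

theorem notMem_mul_of_disjoint_smul {A B : Subgroup G} {g h : G}
    (hd : Disjoint (g • (A : Set G)) (h • (B : Set G))) : g⁻¹ * h ∉ (A : Set G) * B := by
  rintro ⟨x, hx, y, hy, hxy⟩
  refine Set.disjoint_left.mp hd ⟨x, hx, rfl⟩ ⟨y⁻¹, inv_mem hy, ?_⟩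
  simp only [smul_eq_mul] at hxy ⊢
  rw [show h = g * (x * y) by rw [hxy]; group]
  group

theorem inv_notMem_mul {A B : Subgroup G} {x : G} (hx : x ∉ (A : Set G) * B) :
    x⁻¹ ∉ (B : Set G) * A := by
  rintro ⟨y, hy, z, hz, h⟩
  exact hx ⟨z⁻¹, inv_mem hz, y⁻¹, inv_mem hy, by simp only at h ⊢; rw [← mul_inv_rev, h, inv_inv]⟩

theorem disjoint_mul_mul_smul {A B : Subgroup G} {x : G} (hx : x ∉ (A : Set G) * B) :
    Disjoint ((A : Set G) * B) (A * (x • (B : Set G))) := by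
  rw [Set.disjoint_left]
  rintro _ ⟨y, hy, z, hz, rfl⟩ ⟨y', hy', _, ⟨z', hz', rfl⟩, h⟩
  refine hx ⟨y'⁻¹ * y, mul_mem (inv_mem hy') hy, z * z'⁻¹, mul_mem hz (inv_mem hz'), ?_⟩
  simp only [smul_eq_mul] at h ⊢
  rw [← mul_assoc, mul_assoc y'⁻¹, ← h]
  group

theorem ncard_mul_add_ncard_mul_smul_le [Finite G] {A B : Subgroup G} {x : G}
    (hx : x ∉ (A : Set G) * B) :
    ((A : Set G) * B).ncard + ((A : Set G) * (x • (B : Set G))).ncard ≤ Nat.card G :=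
  Set.ncard_union_eq (disjoint_mul_mul_smul hx) ▸ Set.ncard_le_card _

theorem mul_union_mul_smul_eq_univ [Finite G] {A B : Subgroup G} {x : G}
    (hx : x ∉ (A : Set G) * B)
    (hcard : Nat.card G ≤ ((A : Set G) * B).ncard + ((A : Set G) * (x • (B : Set G))).ncard) :
    (A : Set G) * B ∪ A * (x • (B : Set G)) = Set.univ :=
  Set.eq_of_subset_of_ncard_le (Set.subset_univ _)
    (by rwa [Set.ncard_univ, Set.ncard_union_eq (disjoint_mul_mul_smul hx)])

theorem ncard_mul_add_ncard_mul_lt_card [Finite G] {A B C : Subgroup G} {a b : G}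
    (hE : (A : Set G) * B = A * C) (ha : a ∉ (A : Set G) * B) (hb : b ∉ (A : Set G) * C)
    (hab : a⁻¹ * b ∉ (B : Set G) * C) :
    ((A : Set G) * B).ncard + ((B : Set G) * C).ncard < Nat.card G := by
  have hEC : (A : Set G) * B * C = A * B := by rw [hE, mul_assoc, coe_mul_coe]
  have hEB : (A : Set G) * B * B = A * B := by rw [mul_assoc, coe_mul_coe]
  have hdisj : Disjoint ((A : Set G) * B) (a • ((B : Set G) * C)) := by
    rw [Set.disjoint_left]
    rintro _ he ⟨_, ⟨y, hy, z, hz, rfl⟩, rfl⟩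
    refine ha ?_
    rw [← hEB, ← hEC]
    convert Set.mul_mem_mul (Set.mul_mem_mul he (inv_mem hz)) (inv_mem hy) using 1
    simp [mul_assoc]
  have hbE : b ∉ (A : Set G) * B ∪ a • ((B : Set G) * C) := by
    rintro (h | h)
    · exact hb (hE ▸ h)
    · exact hab (by rwa [Set.mem_smul_set_iff_inv_smul_mem] at h)
  rw [← Set.ncard_smul_set a ((B : Set G) * (C : Set G)), ← Set.ncard_union_eq hdisj]
  exact Set.ncard_lt_card fun h => hbE (h ▸ Set.mem_univ b)

theorem mul_eq_mul_of_ncard_le_ncard_mul_inf [Finite G] {A B C : Subgroup G}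
    (hB : ((A : Set G) * B).ncard ≤ ((A : Set G) * ↑(B ⊓ C)).ncard)
    (hC : ((A : Set G) * C).ncard ≤ ((A : Set G) * ↑(B ⊓ C)).ncard) :
    (A : Set G) * B = A * C := by
  rw [← Set.eq_of_subset_of_ncard_le
      (Set.mul_subset_mul_left (SetLike.coe_subset_coe.mpr inf_le_left)) hB,
    Set.eq_of_subset_of_ncard_le
      (Set.mul_subset_mul_left (SetLike.coe_subset_coe.mpr inf_le_right)) hC]

theorem alphaIdx_eq_one_of_gcd_index_inf_eq_two [Finite G] {A B C : Subgroup G} {a b : G}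
    (ha : a ∉ (A : Set G) * B) (hb : b ∉ (A : Set G) * C) (hab : a⁻¹ * b ∉ (B : Set G) * C)
    (hAB : Nat.gcd A.index B.index = 2) (hAC : Nat.gcd A.index C.index = 2)
    (hABC : Nat.gcd A.index (B ⊓ C).index = 2) (hBC : Nat.gcd B.index C.index ≤ 4) :
    alphaIdx B C = 1 := by
  have haBC : a ∉ (A : Set G) * ↑(B ⊓ C) := fun h =>
    ha (Set.mul_subset_mul_left (SetLike.coe_subset_coe.mpr inf_le_left) h)
  have hAB' := two_mul_ncard_mul_eq_card ha hAB
  have hAC' := two_mul_ncard_mul_eq_card hb hAC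
  have hABC' := two_mul_ncard_mul_eq_card haBC hABC
  have hE : (A : Set G) * B = A * C := mul_eq_mul_of_ncard_le_ncard_mul_inf (by omega) (by omega)
  have hlt := ncard_mul_add_ncard_mul_lt_card hE ha hb hab
  have hα := alphaIdx_pos B C
  by_contra hne
  refine lt_irrefl (Nat.card G * 2) ?_
  calc Nat.card G * 2 ≤ Nat.card G * alphaIdx B C := Nat.mul_le_mul_left _ (by omega)
    _ = ((B : Set G) * C).ncard * Nat.gcd B.index C.index := (ncard_mul_mul_gcd_index B C).symm
    _ ≤ ((B : Set G) * C).ncard * 4 := Nat.mul_le_mul_left _ hBC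
    _ < Nat.card G * 2 := by omega

theorem conj_smul_mul_smul_subset_mul_smul [Finite G] {A B C : Subgroup G} {a b : G}
    (ha : a ∉ (A : Set G) * B) (hAB : Nat.gcd A.index B.index ≤ 2)
    (hABC : Nat.gcd (Nat.lcm A.index B.index) C.index ≤ 4)
    (hsmall : 4 * ((B : Set G) * ((a⁻¹ * b) • (C : Set G))).ncard ≤ Nat.card G) :
    (↑(MulAut.conj a • B) : Set G) * (b • (C : Set G)) ⊆ A * (b • (C : Set G)) := by
  set V := MulAut.conj a • B
  have haV : a ∉ (V : Set G) * A := by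
    rintro ⟨v, hv, y, hy, h⟩
    simp only [V, SetLike.mem_coe, mem_pointwise_smul_iff_inv_smul_mem, MulAut.smul_def,
      MulAut.conj_inv_apply] at hv h
    refine ha ⟨y, hy, y⁻¹ * a, ?_, by group⟩
    rw [show y⁻¹ * a = a⁻¹ * v * a by rw [← h]; group]
    exact hv
  have hidx : (V ⊓ A).index = Nat.lcm A.index B.index := by
    rw [index_inf_eq_lcm_mul_alphaIdx, alphaIdx_eq_one_of_notMem_mul haV
      (by rwa [index_conj_smul, Nat.gcd_comm]), mul_one, index_conj_smul, Nat.lcm_comm]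
  have hX : ((V : Set G) * (b • (C : Set G))).ncard
      = ((B : Set G) * ((a⁻¹ * b) • (C : Set G))).ncard := by
    rw [coe_conj_smul, Set.op_smul_set_mul_eq_mul_smul_set, smul_mul_assoc, Set.ncard_smul_set,
      smul_smul]
  have hY : Nat.card G ≤ 4 * ((↑(V ⊓ A) : Set G) * (b • (C : Set G))).ncard :=
    calc Nat.card G
        ≤ ((↑(V ⊓ A) : Set G) * (b • (C : Set G))).ncard * Nat.gcd (V ⊓ A).index C.index :=
          card_le_ncard_mul_smul_mul_gcd_index _ _ _
      _ ≤ 4 * ((↑(V ⊓ A) : Set G) * (b • (C : Set G))).ncard := by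
          rw [hidx, mul_comm]; exact Nat.mul_le_mul_right _ hABC
  have hYV : (↑(V ⊓ A) : Set G) * (b • (C : Set G)) = V * (b • C) :=
    Set.eq_of_subset_of_ncard_le
      (Set.mul_subset_mul_right (SetLike.coe_subset_coe.mpr inf_le_left)) (by omega)
  rw [← hYV]
  exact Set.mul_subset_mul_right (SetLike.coe_subset_coe.mpr inf_le_right)

theorem mul_union_mul_eq_univ [Finite G] {A B C : Subgroup G} {a b : G}
    (ha : a ∉ (A : Set G) * B) (hb : b ∉ (A : Set G) * C) (hab : a⁻¹ * b ∉ (B : Set G) * C)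
    (hAB : Nat.gcd A.index B.index = 2) (hABC : Nat.gcd (Nat.lcm A.index B.index) C.index ≤ 4)
    (hBC : 3 * Nat.card G ≤ 4 * ((B : Set G) * C).ncard) :
    (B : Set G) * A ∪ B * C = Set.univ := by
  have hBC4 : Nat.gcd B.index C.index ≤ 4 :=
    (Nat.le_of_dvd (Nat.gcd_pos_of_pos_right _ (Nat.pos_of_ne_zero C.index_ne_zero_of_finite))
      (Nat.gcd_dvd_gcd_of_dvd_left _ (Nat.dvd_lcm_right _ _))).trans hABC
  have hw := (card_le_ncard_mul_smul_mul_gcd_index B C (a⁻¹ * b)).trans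
    (Nat.mul_le_mul_left _ hBC4)
  have hwle := ncard_mul_add_ncard_mul_smul_le hab
  have hBCw := mul_union_mul_smul_eq_univ hab (by omega)
  have ha' := inv_notMem_mul ha
  have hBA := two_mul_ncard_mul_eq_card ha' (by rwa [Nat.gcd_comm])
  have hBAa := mul_union_mul_smul_eq_univ ha' (by
    have := card_le_ncard_mul_smul_mul_gcd_index B A a⁻¹
    rw [Nat.gcd_comm, hAB] at this
    omega)
  have hsub := conj_smul_mul_smul_subset_mul_smul (b := b) ha hAB.le hABC (by omega)
  have hdisj : Disjoint ((B : Set G) * (a⁻¹ • (A : Set G))) (B * ((a⁻¹ * b) • (C : Set G))) := by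
    rw [Set.disjoint_left]
    rintro _ ⟨y, hy, _, ⟨x, hx, rfl⟩, rfl⟩ ⟨y', hy', _, ⟨z, hz, rfl⟩, h⟩
    simp only [smul_eq_mul] at h
    have hxV : x ∈ (↑(MulAut.conj a • B) : Set G) * (b • (C : Set G)) := by
      refine ⟨a * (y⁻¹ * y') * a⁻¹, ?_, b * z, ⟨z, hz, rfl⟩, ?_⟩
      · rw [SetLike.mem_coe, mem_pointwise_smul_iff_inv_smul_mem]
        simpa [mul_assoc] using mul_mem (inv_mem hy) hy'
      · simp only
        rw [show x = a * (y⁻¹ * (y * (a⁻¹ * x))) by group, ← h]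
        group
    obtain ⟨x', hx', _, ⟨z', hz', rfl⟩, h'⟩ := hsub hxV
    simp only [smul_eq_mul] at h'
    exact hb ⟨x'⁻¹ * x, mul_mem (inv_mem hx') hx, z'⁻¹, inv_mem hz', by rw [← h']; group⟩
  refine Set.eq_univ_of_forall fun y => by_contra fun hy => ?_
  rw [Set.mem_union, not_or] at hy
  have h₁ : y ∈ (B : Set G) * A ∪ B * (a⁻¹ • (A : Set G)) := hBAa ▸ Set.mem_univ y
  have h₂ : y ∈ (B : Set G) * C ∪ B * ((a⁻¹ * b) • (C : Set G)) := hBCw ▸ Set.mem_univ y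
  exact Set.disjoint_left.mp hdisj (h₁.resolve_left hy.1) (h₂.resolve_left hy.2)

theorem four_mul_ncard_mul_inter_mul_eq_card [Finite G] {A B C : Subgroup G} {a b : G}
    (ha : a ∉ (A : Set G) * B) (hb : b ∉ (A : Set G) * C) (hab : a⁻¹ * b ∉ (B : Set G) * C)
    (hAB : Nat.gcd A.index B.index = 2) (hABC : Nat.gcd (Nat.lcm A.index B.index) C.index ≤ 4)
    (hBC : 4 * ((B : Set G) * C).ncard = 3 * Nat.card G) :
    4 * ((B : Set G) * A ∩ ((B : Set G) * C)).ncard = Nat.card G := by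
  have hBA := two_mul_ncard_mul_eq_card (inv_notMem_mul ha) (by rwa [Nat.gcd_comm])
  have hincl :=
    Set.ncard_union_add_ncard_inter ((B : Set G) * (A : Set G)) ((B : Set G) * (C : Set G))
  rw [mul_union_mul_eq_univ ha hb hab hAB hABC hBC.ge, Set.ncard_univ] at hincl
  omega

theorem mul_inf_eq_mul_inter_mul [Finite G] {A B C : Subgroup G} {b : G}
    (hb : b ∉ (A : Set G) * C) (hAC : Nat.gcd A.index C.index ≤ 2)
    (hBAC : Nat.gcd B.index (Nat.lcm A.index C.index) ≤ 4)
    (hsmall : 4 * ((B : Set G) * A ∩ ((B : Set G) * C)).ncard ≤ Nat.card G) :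
    (B : Set G) * ↑(A ⊓ C) = (B : Set G) * A ∩ ((B : Set G) * C) := by
  have hidx : (A ⊓ C).index = Nat.lcm A.index C.index := by
    rw [index_inf_eq_lcm_mul_alphaIdx, alphaIdx_eq_one_of_notMem_mul hb hAC, mul_one]
  have hge : Nat.card G ≤ ((B : Set G) * ↑(A ⊓ C)).ncard * 4 := by
    have := card_le_ncard_mul_smul_mul_gcd_index B (A ⊓ C) 1
    rw [one_smul, hidx] at this
    exact this.trans (Nat.mul_le_mul_left _ hBAC)
  exact Set.eq_of_subset_of_ncard_le
    (Set.subset_inter (Set.mul_subset_mul_left (SetLike.coe_subset_coe.mpr inf_le_left))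
      (Set.mul_subset_mul_left (SetLike.coe_subset_coe.mpr inf_le_right))) (by omega)

end Subgroup

theorem harmonic_244_alpha_restrictions_general
    (G : Type*) [Group G] [Fintype G] (U₁ U₂ U₃ : Subgroup G)
    (r₁ r₂ r₃ : ℕ)
    (h12 : Nat.Coprime r₁ r₂) (h13 : Nat.Coprime r₁ r₃) (h23 : Nat.Coprime r₂ r₃)
    (hodd : Odd r₁)
    (hU₁ : U₁.index = 2 * r₁) (hU₂ : U₂.index = 4 * r₂) (hU₃ : U₃.index = 4 * r₃)
    (hharm : ∃ g₁ g₂ g₃ : G,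
      Disjoint (g₁ • (U₁ : Set G)) (g₂ • (U₂ : Set G)) ∧
      Disjoint (g₁ • (U₁ : Set G)) (g₃ • (U₃ : Set G)) ∧
      Disjoint (g₂ • (U₂ : Set G)) (g₃ • (U₃ : Set G))) :
    alphaIdx U₂ U₃ ≠ 2 ∧
    (alphaIdx U₂ U₃ = 3 → 3 ∣ r₁ ∧
      Nat.card ((U₂ : Set G) * ((U₁ ⊓ U₃ : Subgroup G) : Set G) : Set G) =
        Fintype.card G / 4 ∧
      Nat.card
        ((((U₂ : Set G) * (U₁ : Set G)) ∩ ((U₂ : Set G) * (U₃ : Set G))) : Set G) =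
        Fintype.card G / 4) := by
  obtain ⟨g₁, g₂, g₃, h₁₂, h₁₃, h₂₃⟩ := hharm
  have ha := Subgroup.notMem_mul_of_disjoint_smul h₁₂
  have hb := Subgroup.notMem_mul_of_disjoint_smul h₁₃
  have hab : (g₁⁻¹ * g₂)⁻¹ * (g₁⁻¹ * g₃) ∉ (U₂ : Set G) * U₃ := by
    simpa [mul_assoc] using Subgroup.notMem_mul_of_disjoint_smul h₂₃
  have hr₁2 : r₁.Coprime 2 := Nat.coprime_two_right.mpr hodd
  have g₁₂ : Nat.gcd U₁.index U₂.index = 2 :=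
    hU₁ ▸ hU₂ ▸ Nat.gcd_two_mul_four_mul (hr₁2.mul_right h12)
  have g₁₃ : Nat.gcd U₁.index U₃.index = 2 :=
    hU₁ ▸ hU₃ ▸ Nat.gcd_two_mul_four_mul (hr₁2.mul_right h13)
  have g₂₃ : Nat.gcd U₂.index U₃.index = 4 := hU₂ ▸ hU₃ ▸ Nat.gcd_four_mul_four_mul h23
  have hα : ∀ k, alphaIdx U₂ U₃ = k → r₁.Coprime k → k = 1 := by
    rintro k rfl hcop
    refine Subgroup.alphaIdx_eq_one_of_gcd_index_inf_eq_two ha hb hab g₁₂ g₁₃ ?_ g₂₃.le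
    rw [Subgroup.index_inf_eq_lcm_mul_alphaIdx, hU₁, hU₂, hU₃, Nat.lcm_four_mul_four_mul h23,
      mul_assoc]
    exact Nat.gcd_two_mul_four_mul (hr₁2.mul_right ((h12.mul_right h13).mul_right hcop))
  refine ⟨fun h2 => absurd (hα 2 h2 hr₁2) (by norm_num), fun h3 => ⟨?_, ?_⟩⟩
  · by_contra h
    exact absurd (hα 3 h3 (Nat.coprime_comm.mp (Nat.prime_three.coprime_iff_not_dvd.mpr h)))
      (by norm_num)
  have hU₂₃ := Subgroup.ncard_mul_mul_gcd_index U₂ U₃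
  rw [g₂₃, h3] at hU₂₃
  have hinter := Subgroup.four_mul_ncard_mul_inter_mul_eq_card ha hb hab g₁₂
    (by rw [hU₁, hU₂, hU₃, Nat.lcm_two_mul_four_mul (hr₁2.mul_right h12),
      Nat.gcd_four_mul_four_mul (h13.mul_left h23)]) (by omega)
  rw [Nat.card_coe_set_eq, Nat.card_coe_set_eq, ← Nat.card_eq_fintype_card,
    Subgroup.mul_inf_eq_mul_inter_mul hb g₁₃.le (by
      rw [hU₁, hU₂, hU₃, Nat.lcm_two_mul_four_mul (hr₁2.mul_right h13),
        Nat.gcd_four_mul_four_mul (h12.symm.mul_right h23)]) hinter.le]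
  exact ⟨by omega, by omega⟩

theorem harmonic_244_alpha_restrictions
    (G : Type*) [Group G] [Fintype G] (U₁ U₂ U₃ : Subgroup G)
    (r₁ r₂ r₃ : ℕ) (hr₁ : 0 < r₁) (hr₂ : 0 < r₂) (hr₃ : 0 < r₃)
    (h12 : Nat.Coprime r₁ r₂) (h13 : Nat.Coprime r₁ r₃) (h23 : Nat.Coprime r₂ r₃)
    (hodd : Odd r₁)
    (hU₁ : U₁.index = 2 * r₁) (hU₂ : U₂.index = 4 * r₂) (hU₃ : U₃.index = 4 * r₃)
    (hharm : ∃ g₁ g₂ g₃ : G,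
      Disjoint (g₁ • (U₁ : Set G)) (g₂ • (U₂ : Set G)) ∧
      Disjoint (g₁ • (U₁ : Set G)) (g₃ • (U₃ : Set G)) ∧
      Disjoint (g₂ • (U₂ : Set G)) (g₃ • (U₃ : Set G))) :
    alphaIdx U₂ U₃ ≠ 2 ∧
    (alphaIdx U₂ U₃ = 3 → 3 ∣ r₁ ∧
      Nat.card ((U₂ : Set G) * ((U₁ ⊓ U₃ : Subgroup G) : Set G) : Set G) =
        Fintype.card G / 4 ∧
      Nat.card
        ((((U₂ : Set G) * (U₁ : Set G)) ∩ ((U₂ : Set G) * (U₃ : Set G))) : Set G) =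
        Fintype.card G / 4) :=
  harmonic_244_alpha_restrictions_general G U₁ U₂ U₃ r₁ r₂ r₃ h12 h13 h23 hodd hU₁ hU₂ hU₃ hharm
end

section
/- Let r_2, r_3, r_4, r_5 be pairwise coprime positive integers with r_2 odd. Then for any finite group G, the 5-tuple (3, 3r_2, 6r_3, 6r_4, 6r_5) is not G-harmonic; i.e. there do not exist subgroups U_1, U_2, U_3, U_4, U_5 of G with [G:U_1] = 3, [G:U_2] = 3r_2, and [G:U_j] = 6r_j for j = 3, 4, 5, and elements g_1, ..., g_5 ∈ G such that the cosets g_1U_1, ..., g_5U_5 are pairwise disjoint. -/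
/-!
Let `K` be the normal core of `U₁`, so that `G ⧸ K` has order `3` or `6`. If two disjoint cosets
`a U` and `b V` have images in `G ⧸ K` sharing a point `x K`, then translating back to `K` gives
disjoint cosets of `U ⊓ K` and `V ⊓ K` in `K`; since cosets of subgroups of coprime indices
always meet (then `U * V = G`), the relative indices `[K : U ⊓ K]` and `[K : V ⊓ K]` are not
coprime. Counting in `G ⧸ K`, the images of `g₃ U₃`, `g₄ U₄`, `g₅ U₅` lie in the at most two
points missed by the images of `g₁ U₁` and `g₂ U₂`, and a parity argument produces a point over
which the three relative indices are `2 u₃`, `2 u₄`, `2 u₅` with `u_j ∣ r_j`. This contradicts the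
fact that `(2u, 2v, 2w)` with `u, v, w` pairwise coprime is never harmonic: for such subgroups the
products `U V`, `U W`, `V W` coincide and form a subgroup of index `2`, and two of the three cosets
lie in the same coset of it.
-/

open scoped Pointwise Nat

namespace Subgroup

variable {G : Type*} [Group G]

theorem not_disjoint_smul_iff_mem_mul {U V : Subgroup G} {a b : G} :
    ¬Disjoint (a • (U : Set G)) (b • (V : Set G)) ↔ a⁻¹ * b ∈ (U : Set G) * V := by
  rw [Set.not_disjoint_iff]
  constructor
  · rintro ⟨x, ⟨u, hu, rfl⟩, ⟨v, hv, hx⟩⟩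
    refine ⟨u, hu, v⁻¹, V.inv_mem hv, ?_⟩
    simp only [smul_eq_mul] at hx ⊢
    rw [show b = a * u * v⁻¹ by rw [← hx]; group]; group
  · rintro ⟨u, hu, v, hv, huv⟩
    refine ⟨a * u, ⟨u, hu, rfl⟩, v⁻¹, V.inv_mem hv, ?_⟩
    simp only [smul_eq_mul] at huv ⊢
    rw [show b = a * (u * v) by rw [huv]; group]; group

theorem natCard_image_mk (U V : Subgroup G) :
    Nat.card (((↑) : G → G ⧸ V) '' U) = V.relIndex U := by
  have smul_one (u : U) : u • ((1 : G) : G ⧸ V) = ((u : G) : G ⧸ V) := by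
    change (u : G) • ((1 : G) : G ⧸ V) = _
    rw [MulAction.Quotient.smul_coe, smul_eq_mul, mul_one]
  have horbit : MulAction.orbit U ((1 : G) : G ⧸ V) = ((↑) : G → G ⧸ V) '' U := by
    ext q
    simp only [MulAction.mem_orbit_iff, smul_one, Set.mem_image, Subtype.exists, SetLike.mem_coe,
      exists_prop]
  have hstab : MulAction.stabilizer U ((1 : G) : G ⧸ V) = V.subgroupOf U := by
    ext u
    rw [MulAction.mem_stabilizer_iff, smul_one, mem_subgroupOf, QuotientGroup.eq, mul_one,
      inv_mem_iff]
  rw [relIndex, ← hstab, MulAction.index_stabilizer, horbit, Nat.card_coe_set_eq]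

theorem natCard_mul (U V : Subgroup G) :
    Nat.card ((U : Set G) * (V : Set G) : Set G) = Nat.card V * V.relIndex U := by
  rw [card_mul_eq_card_subgroup_mul_card_quotient, natCard_image_mk]

theorem index_inf_eq_index_mul_relIndex (U V : Subgroup G) :
    (U ⊓ V).index = U.index * V.relIndex U := by
  rw [← relIndex_mul_index inf_le_left, inf_relIndex_left, mul_comm]

theorem relIndex_mul_index_comm (H K : Subgroup G) :
    K.relIndex H * H.index = H.relIndex K * K.index := by
  rw [mul_comm, ← index_inf_eq_index_mul_relIndex, mul_comm, ← index_inf_eq_index_mul_relIndex,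
    inf_comm]

theorem inv_mul_mem_of_index_eq_two {T : Subgroup G} (hT : T.index = 2) {x y : G} (hx : x ∉ T)
    (hy : y ∉ T) : x⁻¹ * y ∈ T :=
  (mul_mem_iff_of_index_two hT).mpr (by simp only [inv_mem_iff, hx, hy])

theorem le_of_disjoint_smul_of_index_eq_two {U T : Subgroup G} {a b : G} (hT : T.index = 2)
    (hd : Disjoint (a • (U : Set G)) (b • (T : Set G))) : U ≤ T := by
  have not_mem {x : G} (hx : x ∈ a • (U : Set G)) : b⁻¹ * x ∉ T := fun h =>
    Set.disjoint_left.mp hd hx ⟨b⁻¹ * x, h, by simp [smul_eq_mul]⟩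
  intro u hu
  simpa [mul_assoc] using inv_mul_mem_of_index_eq_two hT
    (not_mem ⟨1, U.one_mem, mul_one a⟩) (not_mem ⟨u, hu, rfl⟩)

theorem ncard_image_smul (K U : Subgroup G) [K.Normal] (a : G) :
    (((↑) : G → G ⧸ K) '' (a • (U : Set G))).ncard = K.relIndex U := by
  rw [show ((↑) : G → G ⧸ K) '' (a • (U : Set G)) = (a : G ⧸ K) • ((↑) '' (U : Set G)) from
    Set.image_smul_distrib (QuotientGroup.mk' K) a U, Set.ncard_smul_set, ← Nat.card_coe_set_eq,
    natCard_image_mk]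

theorem disjoint_smul_sup_of_le {K U W : Subgroup G} [K.Normal] {a b : G} (hK : K ≤ U)
    (hd : Disjoint (a • (U : Set G)) (b • (W : Set G))) :
    Disjoint (a • (U : Set G)) (b • ((W ⊔ K : Subgroup G) : Set G)) := by
  rw [mul_normal, Set.disjoint_left]
  rintro _ ⟨u, hu, rfl⟩ ⟨_, ⟨w, hw, k, hk, rfl⟩, hx⟩
  simp only [smul_eq_mul] at hx
  have hbw : b * w ∈ a • (U : Set G) := by
    refine ⟨u * k⁻¹, U.mul_mem hu (U.inv_mem (hK hk)), ?_⟩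
    simp only [smul_eq_mul]
    rw [← mul_assoc, ← hx]; group
  exact Set.disjoint_left.mp hd hbw ⟨w, hw, rfl⟩

theorem exists_preimage_mul_left_eq_smul {K U : Subgroup G} {a x : G}
    (h : (x : G ⧸ K) ∈ ((↑) : G → G ⧸ K) '' (a • (U : Set G))) :
    ∃ k : K, (fun k : K => x * k) ⁻¹' (a • (U : Set G)) = k • (U.subgroupOf K : Set K) := by
  obtain ⟨y, ⟨u₀, hu₀, rfl⟩, hy⟩ := h
  have hk₀ : x⁻¹ * (a * u₀) ∈ K := QuotientGroup.eq.mp hy.symm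
  refine ⟨⟨x⁻¹ * (a * u₀), hk₀⟩, Set.ext fun k => ?_⟩
  rw [Set.mem_preimage, Set.mem_smul_set_iff_inv_smul_mem, Set.mem_smul_set_iff_inv_smul_mem,
    SetLike.mem_coe, SetLike.mem_coe, mem_subgroupOf, smul_eq_mul, smul_eq_mul]
  have : a⁻¹ * (x * k) = u₀ * ((⟨x⁻¹ * (a * u₀), hk₀⟩ : K)⁻¹ * k : K) := by
    push_cast; group
  rw [this, mul_mem_cancel_left hu₀]

variable [Finite G]

theorem relIndex_lt_index_of_disjoint_smul {U V : Subgroup G} {a b : G}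
    (hd : Disjoint (a • (U : Set G)) (b • (V : Set G))) : V.relIndex U < V.index := by
  have hle : V.relIndex U ≤ V.index :=
    relIndex_top_right V ▸ relIndex_le_of_le_right le_top (by simp [index_ne_zero_of_finite])
  refine hle.lt_of_ne fun heq => not_disjoint_smul_iff_mem_mul.mpr ?_ hd
  have huniv : (U : Set G) * (V : Set G) = Set.univ := by
    refine Set.eq_of_subset_of_ncard_le (Set.subset_univ _) ?_ (Set.toFinite _)
    rw [Set.ncard_univ, ← Nat.card_coe_set_eq, natCard_mul, heq, card_mul_index]
  exact huniv ▸ Set.mem_univ _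

theorem not_disjoint_smul_of_coprime_index {U V : Subgroup G} (a b : G)
    (h : Nat.Coprime U.index V.index) : ¬Disjoint (a • (U : Set G)) (b • (V : Set G)) := by
  intro hd
  have hdvd : V.index ∣ U.index * V.relIndex U :=
    index_inf_eq_index_mul_relIndex U V ▸ index_dvd_of_le inf_le_right
  have hpos : V.relIndex U ≠ 0 := index_ne_zero_of_finite
  have := Nat.le_of_dvd (Nat.pos_of_ne_zero hpos) (h.symm.dvd_of_dvd_mul_left hdvd)
  exact this.not_gt (relIndex_lt_index_of_disjoint_smul hd)

theorem two_mul_relIndex_eq_index {U V : Subgroup G} {a b : G} {u v : ℕ}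
    (hU : U.index = 2 * u) (hV : V.index = 2 * v) (huv : Nat.Coprime u v)
    (hd : Disjoint (a • (U : Set G)) (b • (V : Set G))) : 2 * V.relIndex U = V.index := by
  have hdvd : 2 * v ∣ 2 * u * V.relIndex U :=
    hU ▸ hV ▸ index_inf_eq_index_mul_relIndex U V ▸ index_dvd_of_le inf_le_right
  rw [mul_assoc, Nat.mul_dvd_mul_iff_left two_pos] at hdvd
  obtain ⟨t, ht⟩ := huv.symm.dvd_of_dvd_mul_left hdvd
  have hpos : V.relIndex U ≠ 0 := index_ne_zero_of_finite
  have hlt : v * t < v * 2 := by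
    rw [← ht, mul_comm v, ← hV]
    exact relIndex_lt_index_of_disjoint_smul hd
  have ht₁ : t = 1 := by
    have := Nat.lt_of_mul_lt_mul_left hlt
    have : t ≠ 0 := by rintro rfl; exact hpos ht
    omega
  rw [hV, ht, ht₁, mul_one]

theorem two_mul_natCard_mul_eq {U V : Subgroup G} {a b : G} {u v : ℕ}
    (hU : U.index = 2 * u) (hV : V.index = 2 * v) (huv : Nat.Coprime u v)
    (hd : Disjoint (a • (U : Set G)) (b • (V : Set G))) :
    2 * Nat.card ((U : Set G) * (V : Set G) : Set G) = Nat.card G := by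
  rw [natCard_mul, mul_left_comm, two_mul_relIndex_eq_index hU hV huv hd, card_mul_index]

theorem mul_eq_mul_of_pairwise_disjoint_smul {U V W : Subgroup G} {a b c : G} {u v w : ℕ}
    (hU : U.index = 2 * u) (hV : V.index = 2 * v) (hW : W.index = 2 * w)
    (huv : Nat.Coprime u v) (huw : Nat.Coprime u w) (hvw : Nat.Coprime v w)
    (hab : Disjoint (a • (U : Set G)) (b • (V : Set G)))
    (hac : Disjoint (a • (U : Set G)) (c • (W : Set G)))
    (hbc : Disjoint (b • (V : Set G)) (c • (W : Set G))) :
    (U : Set G) * (V : Set G) = (U : Set G) * (W : Set G) := by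
  have hVW : (V ⊓ W).index = 2 * (v * w) := by
    have := two_mul_relIndex_eq_index hV hW hvw hbc
    rw [hW] at this
    rw [index_inf_eq_index_mul_relIndex, hV, show W.relIndex V = w by omega, mul_assoc]
  have hUVW := two_mul_natCard_mul_eq hU hVW (huv.mul_right huw)
    (hab.mono_right (Set.smul_set_mono inf_le_left))
  have eq_of_le {Y : Subgroup G} (hY : V ⊓ W ≤ Y)
      (hcard : 2 * Nat.card ((U : Set G) * (Y : Set G) : Set G) = Nat.card G) :
      (U : Set G) * (V ⊓ W : Subgroup G) = (U : Set G) * (Y : Set G) := by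
    refine Set.eq_of_subset_of_ncard_le (Set.mul_subset_mul_left hY) ?_ (Set.toFinite _)
    rw [← Nat.card_coe_set_eq, ← Nat.card_coe_set_eq]
    omega
  rw [← eq_of_le inf_le_left (two_mul_natCard_mul_eq hU hV huv hab),
    eq_of_le inf_le_right (two_mul_natCard_mul_eq hU hW huw hac)]

theorem not_pairwise_disjoint_smul_of_index_eq_two_mul {U V W : Subgroup G} (a b c : G)
    {u v w : ℕ} (hU : U.index = 2 * u) (hV : V.index = 2 * v) (hW : W.index = 2 * w)
    (huv : Nat.Coprime u v) (huw : Nat.Coprime u w) (hvw : Nat.Coprime v w) :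
    ¬(Disjoint (a • (U : Set G)) (b • (V : Set G)) ∧
      Disjoint (a • (U : Set G)) (c • (W : Set G)) ∧
      Disjoint (b • (V : Set G)) (c • (W : Set G))) := by
  rintro ⟨hab, hac, hbc⟩
  have hUV := mul_eq_mul_of_pairwise_disjoint_smul hU hV hW huv huw hvw hab hac hbc
  have hVU := mul_eq_mul_of_pairwise_disjoint_smul hV hU hW huv.symm hvw huw hab.symm hbc hac
  have hWU := mul_eq_mul_of_pairwise_disjoint_smul hW hU hV huw.symm hvw.symm huv hac.symm hbc.symm
    hab
  have inv_mul (X Y : Subgroup G) : ((X : Set G) * (Y : Set G))⁻¹ = (Y : Set G) * (X : Set G) := by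
    rw [mul_inv_rev, inv_coe_set, inv_coe_set]
  -- The three product sets coincide, so `U * V` is a subgroup, of index two.
  have hcomm : (V : Set G) * (U : Set G) = (U : Set G) * (V : Set G) := by
    rw [hVU, ← inv_mul, ← hWU, inv_mul, hUV]
  let T : Subgroup G :=
    { carrier := (U : Set G) * (V : Set G)
      mul_mem' := fun hx hy => by
        have := Set.mul_mem_mul hx hy
        rwa [mul_assoc, ← mul_assoc (V : Set G), hcomm, mul_assoc, coe_mul_coe, ← mul_assoc,
          coe_mul_coe] at this
      one_mem' := ⟨1, U.one_mem, 1, V.one_mem, mul_one 1⟩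
      inv_mem' := fun hx => by
        have := Set.inv_mem_inv.mpr hx
        rwa [inv_mul, hcomm] at this }
  have hT : T.index = 2 := by
    have hcard : T.index * Nat.card T = 2 * Nat.card T :=
      (index_mul_card T).trans (two_mul_natCard_mul_eq hU hV huv hab).symm
    exact Nat.eq_of_mul_eq_mul_right Nat.card_pos hcard
  have hab' : a⁻¹ * b ∉ T := fun h => not_disjoint_smul_iff_mem_mul.mpr h hab
  have hac' : a⁻¹ * c ∉ T := fun h => not_disjoint_smul_iff_mem_mul.mpr (hUV ▸ h) hac
  have hbc' : b⁻¹ * c ∉ T := fun h =>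
    not_disjoint_smul_iff_mem_mul.mpr ((hcomm.symm.trans hVU) ▸ h) hbc
  exact hbc' (by simpa [mul_assoc] using inv_mul_mem_of_index_eq_two hT hab' hac')

theorem disjoint_image_smul_of_coprime_relIndex {K U V : Subgroup G} {a b : G}
    (hd : Disjoint (a • (U : Set G)) (b • (V : Set G)))
    (h : Nat.Coprime (U.relIndex K) (V.relIndex K)) :
    Disjoint (((↑) : G → G ⧸ K) '' (a • (U : Set G))) (((↑) : G → G ⧸ K) '' (b • (V : Set G))) := by
  refine Set.disjoint_left.mpr fun q hU hV => ?_
  obtain ⟨x, rfl⟩ := QuotientGroup.mk_surjective q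
  obtain ⟨k, hk⟩ := exists_preimage_mul_left_eq_smul hU
  obtain ⟨l, hl⟩ := exists_preimage_mul_left_eq_smul hV
  have := hd.preimage (fun k : K => x * k)
  rw [hk, hl] at this
  exact not_disjoint_smul_of_coprime_index k l h this

theorem not_pairwise_disjoint_smul_of_mem_image {K U V W : Subgroup G} (a b c : G) {q : G ⧸ K}
    (hU : q ∈ ((↑) : G → G ⧸ K) '' (a • (U : Set G)))
    (hV : q ∈ ((↑) : G → G ⧸ K) '' (b • (V : Set G)))
    (hW : q ∈ ((↑) : G → G ⧸ K) '' (c • (W : Set G))) {u v w : ℕ}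
    (hu : U.relIndex K = 2 * u) (hv : V.relIndex K = 2 * v) (hw : W.relIndex K = 2 * w)
    (huv : Nat.Coprime u v) (huw : Nat.Coprime u w) (hvw : Nat.Coprime v w) :
    ¬(Disjoint (a • (U : Set G)) (b • (V : Set G)) ∧
      Disjoint (a • (U : Set G)) (c • (W : Set G)) ∧
      Disjoint (b • (V : Set G)) (c • (W : Set G))) := by
  obtain ⟨x, rfl⟩ := QuotientGroup.mk_surjective q
  obtain ⟨k, hk⟩ := exists_preimage_mul_left_eq_smul hU
  obtain ⟨l, hl⟩ := exists_preimage_mul_left_eq_smul hV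
  obtain ⟨m, hm⟩ := exists_preimage_mul_left_eq_smul hW
  rintro ⟨hab, hac, hbc⟩
  have hab := hab.preimage (fun k : K => x * k)
  have hac := hac.preimage (fun k : K => x * k)
  have hbc := hbc.preimage (fun k : K => x * k)
  rw [hk, hl] at hab
  rw [hk, hm] at hac
  rw [hl, hm] at hbc
  exact not_pairwise_disjoint_smul_of_index_eq_two_mul k l m hu hv hw huv huw hvw ⟨hab, hac, hbc⟩

theorem index_normalCore_dvd_factorial (H : Subgroup G) : H.normalCore.index ∣ H.index ! := by
  rw [normalCore_eq_ker, index_ker, index_eq_card, ← Nat.card_perm]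
  exact card_subgroup_dvd_card _

theorem three_le_index_of_disjoint_smul {U T : Subgroup G} {a b : G} (hU : Odd U.index)
    (hd : Disjoint (a • (U : Set G)) (b • (T : Set G))) : 3 ≤ T.index := by
  have h₀ : T.index ≠ 0 := index_ne_zero_of_finite
  have h₁ : T.index ≠ 1 := fun h =>
    not_disjoint_smul_of_coprime_index a b (h ▸ Nat.coprime_one_right _) hd
  have h₂ : T.index ≠ 2 := fun h => by
    have := index_dvd_of_le (le_of_disjoint_smul_of_index_eq_two h hd)
    rw [h, ← even_iff_two_dvd] at this
    exact Nat.not_even_iff_odd.mpr hU this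
  omega

theorem relIndex_normalCore_dvd_two {U : Subgroup G} (hU : U.index = 3) :
    U.normalCore.relIndex U ∣ 2 := by
  have h6 : U.normalCore.relIndex U * 3 ∣ 2 * 3 := by
    have := index_normalCore_dvd_factorial U
    rwa [← relIndex_mul_index (normalCore_le U), hU] at this
  exact Nat.dvd_of_mul_dvd_mul_right three_pos h6

theorem relIndex_normalCore_eq_or {U W : Subgroup G} {a b : G} {k : ℕ} (hU : U.index = 3)
    (hd : Disjoint (a • (U : Set G)) (b • (W : Set G))) (hW : W.index = 3 * k) :
    U.normalCore.relIndex W = U.normalCore.relIndex U ∧ W.relIndex U.normalCore = k ∨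
      2 * W.relIndex U.normalCore = k := by
  set K := U.normalCore
  have hK : K.relIndex U * 3 = K.index := hU ▸ relIndex_mul_index (normalCore_le U)
  have hsup : K.relIndex W * (W ⊔ K).index = K.index :=
    relIndex_sup_right W K ▸ relIndex_mul_index le_sup_right
  -- `a • U` misses a coset of `W ⊔ K`, so the image of `W` in `G ⧸ K` is no larger than that of `U`
  have h3 : 3 ≤ (W ⊔ K).index := three_le_index_of_disjoint_smul (by rw [hU]; decide)
    (disjoint_smul_sup_of_le (normalCore_le U) hd)
  have hm : K.relIndex U ≤ 2 := Nat.le_of_dvd two_pos (relIndex_normalCore_dvd_two hU)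
  have hm₀ : K.relIndex U ≠ 0 := index_ne_zero_of_finite
  have hmW : K.relIndex W ≠ 0 := index_ne_zero_of_finite
  have hle : K.relIndex W ≤ K.relIndex U := by nlinarith
  have hcomm := relIndex_mul_index_comm W K
  rw [hW, ← hK] at hcomm
  obtain h | ⟨h₁, h₂⟩ : K.relIndex W = K.relIndex U ∨ K.relIndex W = 1 ∧ K.relIndex U = 2 := by
    omega
  · rw [h] at hcomm
    have := Nat.eq_of_mul_eq_mul_left (Nat.pos_of_ne_zero hm₀)
      (hcomm.trans (by ring) : _ = K.relIndex U * (3 * W.relIndex K))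
    exact .inl ⟨h, by omega⟩
  · rw [h₁, h₂] at hcomm
    omega

theorem exists_pair_forall_image_smul_subset {U₁ U₂ : Subgroup G} {g₁ g₂ : G} {r₂ : ℕ}
    (hU₁ : U₁.index = 3) (hU₂ : U₂.index = 3 * r₂) (hr₂ : Odd r₂)
    (d₁₂ : Disjoint (g₁ • (U₁ : Set G)) (g₂ • (U₂ : Set G))) :
    ∃ x y : G ⧸ U₁.normalCore, ∀ (W : Subgroup G) (g : G) (r : ℕ), W.index = 6 * r →
      Nat.Coprime r₂ r → Disjoint (g₁ • (U₁ : Set G)) (g • (W : Set G)) →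
      Disjoint (g₂ • (U₂ : Set G)) (g • (W : Set G)) →
      (((↑) : G → G ⧸ U₁.normalCore) '' (g • (W : Set G))).Nonempty ∧
      ((↑) : G → G ⧸ U₁.normalCore) '' (g • (W : Set G)) ⊆ {x, y} ∧
      ({x, y} ⊆ ((↑) : G → G ⧸ U₁.normalCore) '' (g • (W : Set G)) ∨
        W.relIndex U₁.normalCore = r) ∧
      (W.relIndex U₁.normalCore = r ∨ W.relIndex U₁.normalCore = 2 * r) := by
  have hn₁ : U₁.relIndex U₁.normalCore = 1 := relIndex_eq_one.mpr (normalCore_le U₁)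
  obtain ⟨hm₂, hn₂⟩ : U₁.normalCore.relIndex U₂ = U₁.normalCore.relIndex U₁ ∧
      U₂.relIndex U₁.normalCore = r₂ := by
    refine (relIndex_normalCore_eq_or hU₁ d₁₂ hU₂).resolve_right fun h => ?_
    exact Nat.not_even_iff_odd.mpr hr₂ ⟨_, h ▸ two_mul _⟩
  set S := (((↑) : G → G ⧸ U₁.normalCore) '' (g₁ • (U₁ : Set G)) ∪ (↑) '' (g₂ • (U₂ : Set G)))ᶜ
  have hS : S.ncard = U₁.normalCore.relIndex U₁ := by
    rw [Set.ncard_compl, Set.ncard_union_eq (disjoint_image_smul_of_coprime_relIndex d₁₂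
      (hn₁ ▸ Nat.coprime_one_left _)), ncard_image_smul, ncard_image_smul, hm₂, ← index_eq_card,
      ← relIndex_mul_index (normalCore_le U₁), hU₁]
    omega
  obtain ⟨x, y, hxy⟩ : ∃ x y, S = {x, y} := by
    rcases (Nat.dvd_prime Nat.prime_two).mp (relIndex_normalCore_dvd_two hU₁) with h | h
    · obtain ⟨x, hx⟩ := Set.ncard_eq_one.mp (hS.trans h)
      exact ⟨x, x, by rw [hx, Set.pair_eq_singleton]⟩
    · obtain ⟨x, y, -, hxy⟩ := Set.ncard_eq_two.mp (hS.trans h)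
      exact ⟨x, y, hxy⟩
  refine ⟨x, y, fun W g r hW hr d₁ d₂ => ?_⟩
  have hcases := relIndex_normalCore_eq_or hU₁ d₁ (k := 2 * r) (by rw [hW]; ring)
  have hsub : ((↑) : G → G ⧸ U₁.normalCore) '' (g • (W : Set G)) ⊆ {x, y} := by
    rw [← hxy, Set.subset_compl_iff_disjoint_left, Set.disjoint_union_left]
    refine ⟨disjoint_image_smul_of_coprime_relIndex d₁ (hn₁ ▸ Nat.coprime_one_left _),
      disjoint_image_smul_of_coprime_relIndex d₂ ?_⟩
    rw [hn₂]
    rcases hcases with ⟨-, h⟩ | h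
    · exact h ▸ Nat.Coprime.mul_right hr₂.coprime_two_right hr
    · exact (show W.relIndex U₁.normalCore = r by omega) ▸ hr
  refine ⟨(Set.smul_set_nonempty.mpr ⟨1, W.one_mem⟩).image _, hsub, ?_, ?_⟩
  · rcases hcases with ⟨hm, -⟩ | h
    · refine .inl (Set.eq_of_subset_of_ncard_le hsub ?_).symm.subset
      rw [ncard_image_smul, hm, ← hS, hxy]
    · exact .inr (by omega)
  · rcases hcases with ⟨-, h⟩ | h <;> omega

end Subgroup

theorem even_and_even_of_not_coprime {n n' r r' : ℕ} (hn : n = r ∨ n = 2 * r)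
    (hn' : n' = r' ∨ n' = 2 * r') (hr : Nat.Coprime r r') (h : ¬Nat.Coprime n n') :
    Even n ∧ Even n' := by
  have even_of {a b : ℕ} (hab : Nat.Coprime a b) (h : ¬Nat.Coprime a (2 * b)) : Even a := by
    by_contra ha
    exact h (Nat.Coprime.mul_right (Nat.not_even_iff_odd.mp ha).coprime_two_right hab)
  rcases hn with rfl | rfl <;> rcases hn' with rfl | rfl
  · exact absurd hr h
  · exact ⟨even_of hr h, even_two_mul _⟩
  · exact ⟨even_two_mul _, even_of hr.symm fun h' => h h'.symm⟩
  · exact ⟨even_two_mul _, even_two_mul _⟩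

theorem exists_mem_of_subset_pair {α : Type*} {x y : α} {C₁ C₂ C₃ : Set α}
    {n₁ n₂ n₃ r₁ r₂ r₃ : ℕ}
    (h₁ : C₁.Nonempty ∧ C₁ ⊆ {x, y} ∧ ({x, y} ⊆ C₁ ∨ n₁ = r₁) ∧ (n₁ = r₁ ∨ n₁ = 2 * r₁))
    (h₂ : C₂.Nonempty ∧ C₂ ⊆ {x, y} ∧ ({x, y} ⊆ C₂ ∨ n₂ = r₂) ∧ (n₂ = r₂ ∨ n₂ = 2 * r₂))
    (h₃ : C₃.Nonempty ∧ C₃ ⊆ {x, y} ∧ ({x, y} ⊆ C₃ ∨ n₃ = r₃) ∧ (n₃ = r₃ ∨ n₃ = 2 * r₃))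
    (hr₁₂ : Nat.Coprime r₁ r₂) (hr₁₃ : Nat.Coprime r₁ r₃) (hr₂₃ : Nat.Coprime r₂ r₃)
    (hC₁₂ : Nat.Coprime n₁ n₂ → Disjoint C₁ C₂) (hC₁₃ : Nat.Coprime n₁ n₃ → Disjoint C₁ C₃)
    (hC₂₃ : Nat.Coprime n₂ n₃ → Disjoint C₂ C₃) :
    ∃ q ∈ C₁, q ∈ C₂ ∧ q ∈ C₃ ∧ Even n₁ ∧ Even n₂ ∧ Even n₃ := by
  have meet {C C' : Set α} {n n' r r' : ℕ} (hn : n = r ∨ n = 2 * r) (hn' : n' = r' ∨ n' = 2 * r')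
      (hr : Nat.Coprime r r') (hC : Nat.Coprime n n' → Disjoint C C') (q : α) (hq : q ∈ C)
      (hq' : q ∈ C') : Even n ∧ Even n' :=
    even_and_even_of_not_coprime hn hn' hr fun h => Set.disjoint_left.mp (hC h) hq hq'
  have full {C : Set α} {n r : ℕ} (h : {x, y} ⊆ C ∨ n = r) : x ∈ C ∧ y ∈ C ∨ (Even n → Even r) :=
    h.imp (fun h => ⟨h (by simp), h (by simp)⟩) fun h : n = r => h ▸ id
  have mem {C : Set α} (hne : C.Nonempty) (hC : C ⊆ {x, y}) : x ∈ C ∨ y ∈ C := by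
    obtain ⟨q, hq⟩ := hne
    rcases hC hq with rfl | rfl <;> simp [hq]
  have odd {r r' : ℕ} (h : Nat.Coprime r r') : ¬(Even r ∧ Even r') := fun ⟨e, e'⟩ =>
    Nat.not_coprime_of_dvd_of_dvd one_lt_two (even_iff_two_dvd.mp e) (even_iff_two_dvd.mp e') h
  have m₁₂ := meet h₁.2.2.2 h₂.2.2.2 hr₁₂ hC₁₂
  have m₁₃ := meet h₁.2.2.2 h₃.2.2.2 hr₁₃ hC₁₃
  have m₂₃ := meet h₂.2.2.2 h₃.2.2.2 hr₂₃ hC₂₃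
  have f₁ := full h₁.2.2.1
  have f₂ := full h₂.2.2.1
  have f₃ := full h₃.2.2.1
  have c₁ := mem h₁.1 h₁.2.1
  have c₂ := mem h₂.1 h₂.2.1
  have c₃ := mem h₃.1 h₃.2.1
  have o₁₂ := odd hr₁₂
  have o₁₃ := odd hr₁₃
  have o₂₃ := odd hr₂₃
  -- At most one `rᵢ` is even, so at most one `Cᵢ` is a proper subset of `{x, y}`; the other two
  -- are all of `{x, y}` and meet the third.
  clear h₁ h₂ h₃ hC₁₂ hC₁₃ hC₂₃ meet full mem odd
  grind

theorem exists_eq_two_mul_dvd {n r : ℕ} (hn : n = r ∨ n = 2 * r) (he : Even n) :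
    ∃ u, n = 2 * u ∧ u ∣ r := by
  obtain ⟨u, rfl⟩ := he
  rcases hn with h | h
  · exact ⟨u, by ring, ⟨2, by omega⟩⟩
  · exact ⟨u, by ring, ⟨1, by omega⟩⟩

theorem not_G_harmonic_3_3r2_6r3_6r4_6r5_general
    (r₂ r₃ r₄ r₅ : ℕ)
    (h23 : Nat.Coprime r₂ r₃) (h24 : Nat.Coprime r₂ r₄) (h25 : Nat.Coprime r₂ r₅)
    (h34 : Nat.Coprime r₃ r₄) (h35 : Nat.Coprime r₃ r₅) (h45 : Nat.Coprime r₄ r₅)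
    (hodd : Odd r₂)
    (G : Type*) [Group G] [Fintype G] :
    ¬ ∃ (U₁ U₂ U₃ U₄ U₅ : Subgroup G) (g₁ g₂ g₃ g₄ g₅ : G),
      U₁.index = 3 ∧ U₂.index = 3 * r₂ ∧ U₃.index = 6 * r₃ ∧
      U₄.index = 6 * r₄ ∧ U₅.index = 6 * r₅ ∧
      Disjoint (g₁ • (U₁ : Set G)) (g₂ • (U₂ : Set G)) ∧
      Disjoint (g₁ • (U₁ : Set G)) (g₃ • (U₃ : Set G)) ∧
      Disjoint (g₁ • (U₁ : Set G)) (g₄ • (U₄ : Set G)) ∧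
      Disjoint (g₁ • (U₁ : Set G)) (g₅ • (U₅ : Set G)) ∧
      Disjoint (g₂ • (U₂ : Set G)) (g₃ • (U₃ : Set G)) ∧
      Disjoint (g₂ • (U₂ : Set G)) (g₄ • (U₄ : Set G)) ∧
      Disjoint (g₂ • (U₂ : Set G)) (g₅ • (U₅ : Set G)) ∧
      Disjoint (g₃ • (U₃ : Set G)) (g₄ • (U₄ : Set G)) ∧
      Disjoint (g₃ • (U₃ : Set G)) (g₅ • (U₅ : Set G)) ∧
      Disjoint (g₄ • (U₄ : Set G)) (g₅ • (U₅ : Set G)) := by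
  rintro ⟨U₁, U₂, U₃, U₄, U₅, g₁, g₂, g₃, g₄, g₅, hU₁, hU₂, hU₃, hU₄, hU₅,
    d₁₂, d₁₃, d₁₄, d₁₅, d₂₃, d₂₄, d₂₅, d₃₄, d₃₅, d₄₅⟩
  obtain ⟨x, y, himage⟩ := Subgroup.exists_pair_forall_image_smul_subset hU₁ hU₂ hodd d₁₂
  have h₃ := himage U₃ g₃ r₃ hU₃ h23 d₁₃ d₂₃
  have h₄ := himage U₄ g₄ r₄ hU₄ h24 d₁₄ d₂₄
  have h₅ := himage U₅ g₅ r₅ hU₅ h25 d₁₅ d₂₅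
  obtain ⟨q, hq₃, hq₄, hq₅, e₃, e₄, e₅⟩ := exists_mem_of_subset_pair h₃ h₄ h₅ h34 h35 h45
    (Subgroup.disjoint_image_smul_of_coprime_relIndex d₃₄)
    (Subgroup.disjoint_image_smul_of_coprime_relIndex d₃₅)
    (Subgroup.disjoint_image_smul_of_coprime_relIndex d₄₅)
  obtain ⟨u₃, hu₃, hr₃⟩ := exists_eq_two_mul_dvd h₃.2.2.2 e₃
  obtain ⟨u₄, hu₄, hr₄⟩ := exists_eq_two_mul_dvd h₄.2.2.2 e₄
  obtain ⟨u₅, hu₅, hr₅⟩ := exists_eq_two_mul_dvd h₅.2.2.2 e₅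
  exact Subgroup.not_pairwise_disjoint_smul_of_mem_image g₃ g₄ g₅ hq₃ hq₄ hq₅ hu₃ hu₄ hu₅
    ((h34.coprime_dvd_left hr₃).coprime_dvd_right hr₄)
    ((h35.coprime_dvd_left hr₃).coprime_dvd_right hr₅)
    ((h45.coprime_dvd_left hr₄).coprime_dvd_right hr₅) ⟨d₃₄, d₃₅, d₄₅⟩

theorem not_G_harmonic_3_3r2_6r3_6r4_6r5
    (r₂ r₃ r₄ r₅ : ℕ) (hr₂ : 0 < r₂) (hr₃ : 0 < r₃) (hr₄ : 0 < r₄) (hr₅ : 0 < r₅)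
    (h23 : Nat.Coprime r₂ r₃) (h24 : Nat.Coprime r₂ r₄) (h25 : Nat.Coprime r₂ r₅)
    (h34 : Nat.Coprime r₃ r₄) (h35 : Nat.Coprime r₃ r₅) (h45 : Nat.Coprime r₄ r₅)
    (hodd : Odd r₂)
    (G : Type*) [Group G] [Fintype G] :
    ¬ ∃ (U₁ U₂ U₃ U₄ U₅ : Subgroup G) (g₁ g₂ g₃ g₄ g₅ : G),
      U₁.index = 3 ∧ U₂.index = 3 * r₂ ∧ U₃.index = 6 * r₃ ∧
      U₄.index = 6 * r₄ ∧ U₅.index = 6 * r₅ ∧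
      Disjoint (g₁ • (U₁ : Set G)) (g₂ • (U₂ : Set G)) ∧
      Disjoint (g₁ • (U₁ : Set G)) (g₃ • (U₃ : Set G)) ∧
      Disjoint (g₁ • (U₁ : Set G)) (g₄ • (U₄ : Set G)) ∧
      Disjoint (g₁ • (U₁ : Set G)) (g₅ • (U₅ : Set G)) ∧
      Disjoint (g₂ • (U₂ : Set G)) (g₃ • (U₃ : Set G)) ∧
      Disjoint (g₂ • (U₂ : Set G)) (g₄ • (U₄ : Set G)) ∧
      Disjoint (g₂ • (U₂ : Set G)) (g₅ • (U₅ : Set G)) ∧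
      Disjoint (g₃ • (U₃ : Set G)) (g₄ • (U₄ : Set G)) ∧
      Disjoint (g₃ • (U₃ : Set G)) (g₅ • (U₅ : Set G)) ∧
      Disjoint (g₄ • (U₄ : Set G)) (g₅ • (U₅ : Set G)) :=
  not_G_harmonic_3_3r2_6r3_6r4_6r5_general r₂ r₃ r₄ r₅ h23 h24 h25 h34 h35 h45 hodd G
end
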